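/- arXiv:2303.06617 — 8 statements merged into one kernel-verified Lean document; each statement's English description precedes it below -/
import Mathlib

section
/- Let -π/2 ≤ θ_1 < θ_2 < ⋯ < θ_n ≤ π/2 with λ = min_{s≠t} |θ_s - θ_t|, and let 0 < d ≤ λ/2. Then for every θ ∈ [-π/2, π/2] with min_j |θ - θ_j| ≥ d, we have ∏_{j=1}^n |θ - θ_j| ≥ ((n-1)!/2^{n-1}) · d · λ^{n-1}. -/
/-!
Discard the `θ_j` farthest from `θ`, at distance `r`. All `m + 1` points lie within `r` of `θ`,
and `m + 1` points pairwise at least `λ` apart span an interval of length at least `m λ`,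
so `m λ ≤ 2 r`. Induction on `m` then bounds the product by `d · ∏_{k=1}^{m} k λ / 2`,
the factor `d` coming from the single point that remains.
-/

open Real Finset

namespace Finset

variable {S : Finset ℝ} {lam : ℝ}

theorem card_sub_one_mul_le_max'_sub_min'
    (hS : ∀ a ∈ S, ∀ b ∈ S, a ≠ b → lam ≤ |a - b|) (hne : S.Nonempty) :
    ((#S : ℝ) - 1) * lam ≤ S.max' hne - S.min' hne := by
  induction S using Finset.induction_on_max with
  | empty => exact absurd hne Finset.not_nonempty_empty
  | insert a s hlt ih =>
    rcases s.eq_empty_or_nonempty with rfl | hs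
    · simp
    have ha : a ∉ s := fun h => lt_irrefl a (hlt a h)
    have hlt_max : s.max' hs < a := hlt _ (s.max'_mem hs)
    have hmax : (insert a s).max' hne = a := by
      rw [max'_insert a s hs, max_eq_left hlt_max.le]
    have hmin : (insert a s).min' hne = s.min' hs := by
      rw [min'_insert a s hs, min_eq_right ((s.min'_le_max' hs).trans hlt_max.le)]
    have hgap : lam ≤ a - s.max' hs := by
      have := hS a (mem_insert_self a s) _ (mem_insert_of_mem (s.max'_mem hs)) hlt_max.ne'
      rwa [abs_of_pos (sub_pos.mpr hlt_max)] at this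
    have hrec := ih (fun x hx y hy => hS x (mem_insert_of_mem hx) y (mem_insert_of_mem hy)) hs
    rw [hmax, hmin, card_insert_of_notMem ha]
    push_cast
    linarith

theorem card_sub_one_mul_le_two_mul_of_abs_sub_le
    (hS : ∀ a ∈ S, ∀ b ∈ S, a ≠ b → lam ≤ |a - b|) (hne : S.Nonempty) {x r : ℝ}
    (hr : ∀ s ∈ S, |x - s| ≤ r) :
    ((#S : ℝ) - 1) * lam ≤ 2 * r := by
  have hmax := abs_le.mp (hr _ (S.max'_mem hne))
  have hmin := abs_le.mp (hr _ (S.min'_mem hne))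
  linarith [card_sub_one_mul_le_max'_sub_min' hS hne]

theorem mul_factorial_mul_half_pow_le_prod_abs_sub {m : ℕ} (hcard : #S = m + 1)
    (hS : ∀ a ∈ S, ∀ b ∈ S, a ≠ b → lam ≤ |a - b|) (hlam : 0 ≤ lam) {x d : ℝ} (hd : 0 ≤ d)
    (hx : ∀ s ∈ S, d ≤ |x - s|) :
    d * m.factorial * (lam / 2) ^ m ≤ ∏ s ∈ S, |x - s| := by
  induction m generalizing S with
  | zero =>
    obtain ⟨s, rfl⟩ := card_eq_one.mp hcard
    simpa using hx s (mem_singleton_self s)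
  | succ m ih =>
    have hne : S.Nonempty := card_pos.mp (by omega)
    obtain ⟨s, hs, hfar⟩ := S.exists_max_image (fun t => |x - t|) hne
    have hspread : ((m : ℝ) + 1) * lam ≤ 2 * |x - s| := by
      have := card_sub_one_mul_le_two_mul_of_abs_sub_le hS hne hfar
      rw [hcard] at this
      push_cast at this
      linarith
    have hrest : d * m.factorial * (lam / 2) ^ m ≤ ∏ t ∈ S.erase s, |x - t| :=
      ih (by rw [card_erase_of_mem hs, hcard]; rfl)
        (fun a ha b hb => hS a (mem_of_mem_erase ha) b (mem_of_mem_erase hb))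
        (fun t ht => hx t (mem_of_mem_erase ht))
    rw [← S.mul_prod_erase _ hs]
    calc d * ((m + 1).factorial : ℕ) * (lam / 2) ^ (m + 1)
        = ((m + 1) * lam / 2) * (d * m.factorial * (lam / 2) ^ m) := by
          push_cast [Nat.factorial_succ]; ring
      _ ≤ |x - s| * ∏ t ∈ S.erase s, |x - t| := by
          gcongr
          linarith

end Finset

theorem stmt_1_general (n : ℕ) (hn : 1 ≤ n) (θ : Fin n → ℝ)
    (hmono : StrictMono θ)
    (lam d : ℝ)
    (hlam : IsLeast {r : ℝ | ∃ s t : Fin n, s ≠ t ∧ r = |θ s - θ t|} lam)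
    (hd0 : 0 < d)
    (θ' : ℝ)
    (hsep : ∀ j, d ≤ |θ' - θ j|) :
    ((Nat.factorial (n - 1) : ℝ) / 2 ^ (n - 1)) * d * lam ^ (n - 1) ≤
      ∏ j : Fin n, |θ' - θ j| := by
  obtain ⟨m, rfl⟩ : ∃ m, n = m + 1 := ⟨n - 1, by omega⟩
  obtain ⟨⟨s₀, t₀, -, hlam_eq⟩, hmin⟩ := hlam
  have hS : ∀ a ∈ univ.image θ, ∀ b ∈ univ.image θ, a ≠ b → lam ≤ |a - b| := by
    simp only [mem_image, mem_univ, true_and]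
    rintro _ ⟨s, rfl⟩ _ ⟨t, rfl⟩ hst
    exact hmin ⟨s, t, fun h => hst (congrArg θ h), rfl⟩
  have hbound := mul_factorial_mul_half_pow_le_prod_abs_sub
    (by rw [card_image_of_injective _ hmono.injective, card_univ, Fintype.card_fin]) hS
    (hlam_eq ▸ abs_nonneg _) hd0.le (x := θ') (by simpa using hsep)
  rw [prod_image hmono.injective.injOn] at hbound
  convert hbound using 1
  rw [Nat.add_sub_cancel, div_pow]
  ring

theorem stmt_1 (n : ℕ) (hn : 1 ≤ n) (θ : Fin n → ℝ)
    (hrange : ∀ j, θ j ∈ Set.Icc (-(π / 2)) (π / 2))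
    (hmono : StrictMono θ)
    (lam d : ℝ)
    (hlam : IsLeast {r : ℝ | ∃ s t : Fin n, s ≠ t ∧ r = |θ s - θ t|} lam)
    (hd0 : 0 < d) (hd : d ≤ lam / 2)
    (θ' : ℝ) (hθ' : θ' ∈ Set.Icc (-(π / 2)) (π / 2))
    (hsep : ∀ j, d ≤ |θ' - θ j|) :
    ((Nat.factorial (n - 1) : ℝ) / 2 ^ (n - 1)) * d * lam ^ (n - 1) ≤
      ∏ j : Fin n, |θ' - θ j| :=
  stmt_1_general n hn θ hmono lam d hlam hd0 θ' hsep
end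

section
/- Let μ = M δ_y with M > 2σ > 0, let Y(ω) = M e^{iyω} + W(ω) with |W(ω)| < σ for ω ∈ [-Ω,Ω], let H be the (K+1)×(K+1) Hankel matrix generated by the samples Y(ω_m), ω_m = mΩ/K, m = -K,…,K, and let N = H*H. Then Tr(N)^2 / Tr(N*N) ≤ (1 + 4K σ²/M²)². -/
/-!
Write `H = c uᵀ + E` with `|u k| = 1`, `M ≤ |c i|` and `|E i k| ≤ σ`, and test `H` against
`v = ū`. Row by row, comparing the entries `H i k * v k` with their common target `c i` gives
`n ‖H‖_F² ≤ ‖H v‖² + n³ σ²`, while every entry of `H v` has modulus at least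
`n (M - σ) ≥ n M / 2`, so the noise term is at most `(4 σ² / M²) ‖H v‖²`. Finally
`‖H v‖² = v* N v ≤ ∑ |N j k| ≤ n ‖N‖_F`, and `Tr N = ‖H‖_F²`, `Tr (N* N) = ‖N‖_F²`.
-/

open Matrix Complex

theorem card_mul_sum_norm_sq_le {ι E : Type*} [Fintype ι] [NormedAddCommGroup E]
    [InnerProductSpace ℝ E] (s : ι → E) (b : E) :
    (Fintype.card ι : ℝ) * ∑ k, ‖s k‖ ^ 2
      ≤ ‖∑ k, s k‖ ^ 2 + (Fintype.card ι : ℝ) * ∑ k, ‖s k - b‖ ^ 2 := by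
  set n : ℝ := (Fintype.card ι : ℝ)
  have hdev : ∑ k, ‖s k - b‖ ^ 2
      = ∑ k, ‖s k‖ ^ 2 - 2 * inner ℝ (∑ k, s k) b + n * ‖b‖ ^ 2 := by
    simp only [norm_sub_sq_real, Finset.sum_add_distrib, Finset.sum_sub_distrib, sum_inner,
      ← Finset.mul_sum, Finset.sum_const, Finset.card_univ, nsmul_eq_mul, n]
  have hcenter : ‖∑ k, s k - n • b‖ ^ 2
      = ‖∑ k, s k‖ ^ 2 - 2 * n * inner ℝ (∑ k, s k) b + n ^ 2 * ‖b‖ ^ 2 := by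
    rw [norm_sub_sq_real, inner_smul_right, norm_smul, Real.norm_natCast]
    ring
  rw [hdev]
  linarith [hcenter, sq_nonneg ‖∑ k, s k - n • b‖]

namespace Matrix

theorem trace_conjTranspose_mul_self {m n : Type*} [Fintype m] [Fintype n]
    (A : Matrix m n ℂ) : (Aᴴ * A).trace = ((∑ i, ∑ j, ‖A i j‖ ^ 2 : ℝ) : ℂ) := by
  simp only [trace, diag_apply, mul_apply, conjTranspose_apply, RCLike.star_def, conj_mul',
    ofReal_sum, ofReal_pow]
  exact Finset.sum_comm

theorem sum_norm_sq_mulVec {m n : Type*} [Fintype m] [Fintype n] (A : Matrix m n ℂ)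
    (v : n → ℂ) :
    ((∑ i, ‖(A *ᵥ v) i‖ ^ 2 : ℝ) : ℂ) = star v ⬝ᵥ ((Aᴴ * A) *ᵥ v) := by
  rw [← mulVec_mulVec, dotProduct_mulVec, ← star_mulVec]
  simp only [dotProduct, Pi.star_apply, RCLike.star_def, conj_mul', ofReal_sum, ofReal_pow]

theorem norm_star_dotProduct_mulVec_le {n : Type*} [Fintype n] (A : Matrix n n ℂ)
    {v : n → ℂ} (hv : ∀ k, ‖v k‖ = 1) :
    ‖star v ⬝ᵥ (A *ᵥ v)‖ ≤ ∑ j, ∑ k, ‖A j k‖ := by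
  rw [dot_mulVec_eq_sum_sum, Finset.sum_comm]
  refine (norm_sum_le _ _).trans (Finset.sum_le_sum fun j _ =>
    (norm_sum_le _ _).trans (Finset.sum_le_sum fun k _ => ?_))
  simp [hv]

theorem sq_sum_sum_le_card_sq_mul_sum_sum_sq {n : Type*} [Fintype n] (f : n → n → ℝ) :
    (∑ j, ∑ k, f j k) ^ 2 ≤ (Fintype.card n : ℝ) ^ 2 * ∑ j, ∑ k, f j k ^ 2 := by
  calc (∑ j, ∑ k, f j k) ^ 2 ≤ Fintype.card n * ∑ j, (∑ k, f j k) ^ 2 := by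
        simpa using sq_sum_le_card_mul_sum_sq (s := Finset.univ) (f := fun j => ∑ k, f j k)
    _ ≤ Fintype.card n * ∑ j, Fintype.card n * ∑ k, f j k ^ 2 := by
        gcongr with j
        simpa using sq_sum_le_card_mul_sum_sq (s := Finset.univ) (f := f j)
    _ = _ := by rw [← Finset.mul_sum]; ring

theorem sq_sum_norm_sq_mulVec_le {m n : Type*} [Fintype m] [Fintype n] (A : Matrix m n ℂ)
    {v : n → ℂ} (hv : ∀ k, ‖v k‖ = 1) :
    (∑ i, ‖(A *ᵥ v) i‖ ^ 2) ^ 2 ≤ (Fintype.card n : ℝ) ^ 2 * ∑ j, ∑ k, ‖(Aᴴ * A) j k‖ ^ 2 := by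
  have hle : ∑ i, ‖(A *ᵥ v) i‖ ^ 2 ≤ ∑ j, ∑ k, ‖(Aᴴ * A) j k‖ := by
    calc ∑ i, ‖(A *ᵥ v) i‖ ^ 2 = ‖((∑ i, ‖(A *ᵥ v) i‖ ^ 2 : ℝ) : ℂ)‖ := by
          rw [norm_real, Real.norm_of_nonneg (by positivity)]
      _ ≤ _ := by rw [sum_norm_sq_mulVec]; exact norm_star_dotProduct_mulVec_le _ hv
  calc _ ≤ (∑ j, ∑ k, ‖(Aᴴ * A) j k‖) ^ 2 := by gcongr
    _ ≤ _ := sq_sum_sum_le_card_sq_mul_sum_sum_sq _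

end Matrix

theorem sq_div_le_of_noise_bounds {n T Q D σ M : ℝ} (hn : 0 < n) (hσ : 0 ≤ σ) (hM : 2 * σ < M)
    (hT₀ : 0 ≤ T) (hT : n * T ≤ Q + n ^ 3 * σ ^ 2) (hQ : n ^ 3 * (M - σ) ^ 2 ≤ Q)
    (hD : Q ^ 2 ≤ n ^ 2 * D) :
    T ^ 2 / D ≤ (1 + 4 * σ ^ 2 / M ^ 2) ^ 2 := by
  have hnoise : n ^ 3 * σ ^ 2 ≤ 4 * σ ^ 2 / M ^ 2 * Q := by
    have hM₀ : 0 < M := by linarith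
    calc n ^ 3 * σ ^ 2 = 4 * σ ^ 2 / M ^ 2 * (n ^ 3 * (M / 2) ^ 2) := by field_simp; ring
      _ ≤ 4 * σ ^ 2 / M ^ 2 * Q := by
        gcongr
        refine le_trans ?_ hQ
        gcongr
        linarith
  set R := 1 + 4 * σ ^ 2 / M ^ 2
  have hnT : n * T ≤ R * Q := by linarith
  have hMσ : 0 < M - σ := by linarith
  have hQ₀ : 0 < Q := lt_of_lt_of_le (by positivity) hQ
  have hD₀ : 0 < D := by nlinarith
  rw [div_le_iff₀ hD₀]
  have hsq : (n * T) ^ 2 ≤ (R * Q) ^ 2 := pow_le_pow_left₀ (by positivity) hnT 2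
  have hRD := mul_le_mul_of_nonneg_left hD (sq_nonneg R)
  refine le_of_mul_le_mul_left ?_ (pow_pos hn 2)
  linarith [mul_pow n T 2, mul_pow R Q 2]

section RankOnePerturbation

variable {ι : Type*} {H : Matrix ι ι ℂ} {c u : ι → ℂ} {σ : ℝ}

theorem norm_mul_star_sub_le (hu : ∀ k, ‖u k‖ = 1) (hH : ∀ i k, ‖H i k - c i * u k‖ ≤ σ)
    (i k : ι) : ‖H i k * star (u k) - c i‖ ≤ σ := by
  have hunit : u k * star (u k) = 1 := by
    rw [RCLike.star_def, mul_conj', hu]; norm_num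
  calc ‖H i k * star (u k) - c i‖ = ‖(H i k - c i * u k) * star (u k)‖ := by
        rw [sub_mul, mul_assoc, hunit, mul_one]
    _ ≤ σ := by simpa [hu] using hH i k

variable [Fintype ι]

theorem card_mul_sum_sum_norm_sq_le (hu : ∀ k, ‖u k‖ = 1)
    (hH : ∀ i k, ‖H i k - c i * u k‖ ≤ σ) :
    (Fintype.card ι : ℝ) * ∑ i, ∑ k, ‖H i k‖ ^ 2
      ≤ ∑ i, ‖(H *ᵥ star u) i‖ ^ 2 + (Fintype.card ι : ℝ) ^ 3 * σ ^ 2 := by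
  set n : ℝ := (Fintype.card ι : ℝ)
  have hrow : ∀ i, n * ∑ k, ‖H i k‖ ^ 2 ≤ ‖(H *ᵥ star u) i‖ ^ 2 + n * (n * σ ^ 2) := by
    intro i
    calc n * ∑ k, ‖H i k‖ ^ 2 = n * ∑ k, ‖H i k * star (u k)‖ ^ 2 := by simp [hu]
      _ ≤ ‖∑ k, H i k * star (u k)‖ ^ 2 + n * ∑ k, ‖H i k * star (u k) - c i‖ ^ 2 :=
          card_mul_sum_norm_sq_le _ _
      _ ≤ ‖(H *ᵥ star u) i‖ ^ 2 + n * ∑ _k : ι, σ ^ 2 := by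
          gcongr with k
          · rfl
          · exact norm_mul_star_sub_le hu hH i k
      _ = _ := by simp [n]
  calc n * ∑ i, ∑ k, ‖H i k‖ ^ 2 ≤ ∑ i, (‖(H *ᵥ star u) i‖ ^ 2 + n * (n * σ ^ 2)) := by
        rw [Finset.mul_sum]; exact Finset.sum_le_sum fun i _ => hrow i
    _ = _ := by
      rw [Finset.sum_add_distrib, Finset.sum_const, Finset.card_univ, nsmul_eq_mul]; ring

theorem card_mul_sub_le_norm_mulVec {M : ℝ} (hu : ∀ k, ‖u k‖ = 1)
    (hH : ∀ i k, ‖H i k - c i * u k‖ ≤ σ) (hc : ∀ i, M ≤ ‖c i‖) (i : ι) :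
    (Fintype.card ι : ℝ) * (M - σ) ≤ ‖(H *ᵥ star u) i‖ := by
  have hdev : ‖(H *ᵥ star u) i - (Fintype.card ι : ℂ) * c i‖ ≤ Fintype.card ι * σ := by
    calc ‖(H *ᵥ star u) i - (Fintype.card ι : ℂ) * c i‖
        = ‖∑ k, (H i k * star (u k) - c i)‖ := by simp [mulVec, dotProduct]
      _ ≤ ∑ _k : ι, σ := norm_sum_le_of_le _ fun k _ => norm_mul_star_sub_le hu hH i k
      _ = _ := by simp
  have hmain : (Fintype.card ι : ℝ) * M ≤ ‖(Fintype.card ι : ℂ) * c i‖ := by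
    rw [norm_mul, norm_natCast]; gcongr; exact hc i
  linarith [norm_sub_norm_le ((Fintype.card ι : ℂ) * c i) ((H *ᵥ star u) i),
    norm_sub_rev ((H *ᵥ star u) i) ((Fintype.card ι : ℂ) * c i)]

theorem re_trace_sq_div_re_trace_sq_le [Nonempty ι] {M : ℝ} (hu : ∀ k, ‖u k‖ = 1)
    (hH : ∀ i k, ‖H i k - c i * u k‖ ≤ σ) (hc : ∀ i, M ≤ ‖c i‖) (hM : 2 * σ < M) :
    (Hᴴ * H).trace.re ^ 2 / ((Hᴴ * H)ᴴ * (Hᴴ * H)).trace.re ≤ (1 + 4 * σ ^ 2 / M ^ 2) ^ 2 := by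
  rw [trace_conjTranspose_mul_self, trace_conjTranspose_mul_self, ofReal_re, ofReal_re]
  obtain ⟨i₀⟩ := ‹Nonempty ι›
  have hσ : 0 ≤ σ := (norm_nonneg _).trans (hH i₀ i₀)
  have hQ : (Fintype.card ι : ℝ) ^ 3 * (M - σ) ^ 2 ≤ ∑ i, ‖(H *ᵥ star u) i‖ ^ 2 := by
    calc (Fintype.card ι : ℝ) ^ 3 * (M - σ) ^ 2 = ∑ _i : ι, (Fintype.card ι * (M - σ)) ^ 2 := by
          simp only [Finset.sum_const, Finset.card_univ, nsmul_eq_mul]; ring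
      _ ≤ _ := Finset.sum_le_sum fun i _ => pow_le_pow_left₀ (by nlinarith)
          (card_mul_sub_le_norm_mulVec hu hH hc i) 2
  exact sq_div_le_of_noise_bounds (Nat.cast_pos.mpr Fintype.card_pos) hσ hM (by positivity)
    (card_mul_sum_sum_norm_sq_le hu hH) hQ
    (sq_sum_norm_sq_mulVec_le H fun k => by rw [Pi.star_apply, norm_star, hu])

end RankOnePerturbation

theorem stmt_6_general (K : ℕ) (hK : 1 ≤ K) (Ω : ℝ) (y M σ : ℝ)
    (hM : 2 * σ < M) (W : ℤ → ℂ)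
    (hW : ∀ m : ℤ, |m| ≤ (K : ℤ) → ‖W m‖ < σ)
    (H : Matrix (Fin (K + 1)) (Fin (K + 1)) ℂ)
    (hH : ∀ j k : Fin (K + 1),
      H j k = M * Complex.exp (Complex.I * (y * ((((j : ℤ) + k - K) : ℤ) * Ω / K)))
        + W ((j : ℤ) + k - K))
    (N : Matrix (Fin (K + 1)) (Fin (K + 1)) ℂ) (hN : N = Hᴴ * H) :
    (Matrix.trace N).re ^ 2 / (Matrix.trace (Nᴴ * N)).re ≤ (1 + 4 * K * σ ^ 2 / M ^ 2) ^ 2 := by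
  have hK0 : (K : ℂ) ≠ 0 := by exact_mod_cast (by omega : K ≠ 0)
  set u : Fin (K + 1) → ℂ := fun k => exp (I * (y * ((k : ℕ) * Ω / K)))
  set c : Fin (K + 1) → ℂ := fun i => M * exp (-(I * (y * Ω))) * u i
  have hu : ∀ k, ‖u k‖ = 1 := fun k => by simp [u, norm_exp]
  have hc : ∀ i, M ≤ ‖c i‖ := fun i => by simpa [c, hu, norm_exp] using le_abs_self M
  have hHc : ∀ i k, ‖H i k - c i * u k‖ ≤ σ := by
    intro i k
    have hrankOne : c i * u k = M * exp (I * (y * ((((i : ℤ) + k - K) : ℤ) * Ω / K))) := by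
      simp only [c, u, mul_assoc, ← exp_add]
      congr 2
      push_cast
      field_simp
      ring
    rw [hH, hrankOne, add_sub_cancel_left]
    exact (hW _ (by rw [abs_le]; omega)).le
  subst hN
  calc _ ≤ (1 + 4 * σ ^ 2 / M ^ 2) ^ 2 := re_trace_sq_div_re_trace_sq_le hu hHc hc hM
    _ ≤ _ := by
      gcongr
      have : (1 : ℝ) ≤ K := by exact_mod_cast hK
      linarith

theorem stmt_6 (K : ℕ) (hK : 1 ≤ K) (Ω : ℝ) (hΩ : 0 < Ω) (y M σ : ℝ)
    (hσ : 0 < σ) (hM : 2 * σ < M) (W : ℤ → ℂ)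
    (hW : ∀ m : ℤ, |m| ≤ (K : ℤ) → ‖W m‖ < σ)
    (H : Matrix (Fin (K + 1)) (Fin (K + 1)) ℂ)
    (hH : ∀ j k : Fin (K + 1),
      H j k = M * Complex.exp (Complex.I * (y * ((((j : ℤ) + k - K) : ℤ) * Ω / K)))
        + W ((j : ℤ) + k - K))
    (N : Matrix (Fin (K + 1)) (Fin (K + 1)) ℂ) (hN : N = Hᴴ * H) :
    (Matrix.trace N).re ^ 2 / (Matrix.trace (Nᴴ * N)).re ≤ (1 + 4 * K * σ ^ 2 / M ^ 2) ^ 2 :=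
  stmt_6_general K hK Ω y M σ hM W hW H hH N hN
end

section
/- Let μ = ∑_{j=1}^n a_j δ_{y_j} with distinct y_j ∈ ℝ, and suppose there is an index s with |a_s| = max_j |a_j| and |a_s| > ∑_{t≠s} |a_t| + σ. Let H be the (K+1)×(K+1) Hankel matrix with entries H_{jk} = ∑_{l=1}^n a_l e^{iy_l ω_{j+k-K}} + W_{j+k-K}, where ω_m = mΩ/K and |W_m| < σ, and let N = H*H. Then Tr(N)²/Tr(N*N) ≤ ((|a_s| + ∑_{t≠s}|a_t| + σ)/(|a_s| - ∑_{t≠s}|a_t| - σ))⁴. -/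
open Matrix Complex Finset

/-!
Split off the dominant atom: `H = a_s • p qᵀ + E` with unimodular `p, q` and the entries of `E`
bounded by `ε = ∑_{t ≠ s} |a_t| + σ`. With `c = K + 1`, the entries of `H` are bounded by
`|a_s| + ε`, so `tr N = ‖H‖_F² ≤ c² (|a_s| + ε)²`. Testing against `v = q̄` gives
`|(H v)_j| ≥ c (|a_s| - ε)`, hence `v* N v = ‖H v‖² ≥ c³ (|a_s| - ε)²`, while Cauchy–Schwarz gives
`|v* N v| ≤ ‖N‖_F ‖v‖² = c ‖N‖_F`; so `tr (N* N) = ‖N‖_F² ≥ c⁴ (|a_s| - ε)⁴`.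
-/

section FrobeniusBounds

variable {ι : Type*} [Fintype ι]

theorem re_trace_conjTranspose_mul_self {m : Type*} [Fintype m] (M : Matrix m ι ℂ) :
    (Mᴴ * M).trace.re = ∑ i, ∑ j, ‖M i j‖ ^ 2 := by
  simp only [trace, Matrix.diag, mul_apply, conjTranspose_apply, RCLike.star_def, conj_mul', re_sum]
  rw [Finset.sum_comm]
  norm_cast

theorem dotProduct_conjTranspose_mul_mulVec {m : Type*} [Fintype m] (M : Matrix m ι ℂ)
    (v : ι → ℂ) : star v ⬝ᵥ (Mᴴ * M) *ᵥ v = ((∑ j, ‖(M *ᵥ v) j‖ ^ 2 : ℝ) : ℂ) := by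
  rw [← mulVec_mulVec, dotProduct_mulVec, ← star_mulVec]
  simp only [dotProduct, Pi.star_apply, RCLike.star_def, conj_mul']
  norm_cast

theorem norm_dotProduct_mulVec_sq_le (N : Matrix ι ι ℂ) (v : ι → ℂ) :
    ‖star v ⬝ᵥ N *ᵥ v‖ ^ 2 ≤ (∑ i, ∑ j, ‖N i j‖ ^ 2) * (∑ k, ‖v k‖ ^ 2) ^ 2 := by
  have h_triangle : ‖star v ⬝ᵥ N *ᵥ v‖ ≤ ∑ i, ∑ j, ‖N i j‖ * (‖v i‖ * ‖v j‖) := by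
    simp only [dotProduct, mulVec, Finset.mul_sum]
    refine (norm_sum_le _ _).trans (sum_le_sum fun i _ => (norm_sum_le _ _).trans ?_)
    refine sum_le_sum fun j _ => le_of_eq ?_
    rw [norm_mul, norm_mul, Pi.star_apply, norm_star]
    ring
  have h_cs := sum_mul_sq_le_sq_mul_sq (univ : Finset (ι × ι)) (fun p => ‖N p.1 p.2‖)
    (fun p => ‖v p.1‖ * ‖v p.2‖)
  simp only [← univ_product_univ, sum_product, mul_pow, ← sum_mul_sum, ← sq] at h_cs
  calc ‖star v ⬝ᵥ N *ᵥ v‖ ^ 2 ≤ (∑ i, ∑ j, ‖N i j‖ * (‖v i‖ * ‖v j‖)) ^ 2 := by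
        gcongr
    _ ≤ _ := h_cs

theorem re_trace_conjTranspose_mul_self_le (H : Matrix ι ι ℂ) {A : ℝ} (hA : ∀ i j, ‖H i j‖ ≤ A) :
    (Hᴴ * H).trace.re ≤ Fintype.card ι ^ 2 * A ^ 2 := by
  rw [re_trace_conjTranspose_mul_self]
  calc ∑ i, ∑ j, ‖H i j‖ ^ 2 ≤ ∑ _i : ι, ∑ _j : ι, A ^ 2 := by
        gcongr with i _ j _
        exact hA i j
    _ = _ := by simp only [sum_const, card_univ, nsmul_eq_mul]; ring

theorem pow_four_le_re_trace_of_le_norm_mulVec (H : Matrix ι ι ℂ) {v : ι → ℂ}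
    (hv : ∀ k, ‖v k‖ = 1) {B : ℝ} (hB : 0 ≤ B) (hHv : ∀ j, Fintype.card ι * B ≤ ‖(H *ᵥ v) j‖) :
    Fintype.card ι ^ 4 * B ^ 4 ≤ ((Hᴴ * H)ᴴ * (Hᴴ * H)).trace.re := by
  set c : ℝ := (Fintype.card ι : ℝ)
  have hc : 0 ≤ c := Nat.cast_nonneg _
  have h_quad := norm_dotProduct_mulVec_sq_le (Hᴴ * H) v
  rw [dotProduct_conjTranspose_mul_mulVec, norm_real, Real.norm_of_nonneg (by positivity),
    ← re_trace_conjTranspose_mul_self] at h_quad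
  simp only [hv, one_pow, sum_const, card_univ, nsmul_eq_mul, mul_one] at h_quad
  have h_lower : c * (c * B) ^ 2 ≤ ∑ j, ‖(H *ᵥ v) j‖ ^ 2 := by
    calc c * (c * B) ^ 2 = ∑ _j : ι, (c * B) ^ 2 := by simp [c]
      _ ≤ _ := by gcongr with j; exact hHv j
  have h_nonneg : 0 ≤ ((Hᴴ * H)ᴴ * (Hᴴ * H)).trace.re := by
    rw [re_trace_conjTranspose_mul_self]
    exact sum_nonneg fun _ _ => sum_nonneg fun _ _ => sq_nonneg _
  rcases hc.eq_or_lt with hc0 | hc0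
  · rw [← hc0]; simpa using h_nonneg
  · refine le_of_mul_le_mul_right ?_ (pow_pos hc0 2)
    calc c ^ 4 * B ^ 4 * c ^ 2 = (c * (c * B) ^ 2) ^ 2 := by ring
      _ ≤ (∑ j, ‖(H *ᵥ v) j‖ ^ 2) ^ 2 := pow_le_pow_left₀ (by positivity) h_lower 2
      _ ≤ _ := h_quad

theorem card_mul_sub_le_norm_mulVec_star {α : ℂ} {p q : ι → ℂ} {E : Matrix ι ι ℂ} {ε : ℝ}
    (hp : ∀ j, ‖p j‖ = 1) (hq : ∀ k, ‖q k‖ = 1) (hE : ∀ j k, ‖E j k‖ ≤ ε) (j : ι) :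
    Fintype.card ι * (‖α‖ - ε) ≤ ‖((α • vecMulVec p q + E) *ᵥ star q) j‖ := by
  have h_rank_one : ‖((α • vecMulVec p q) *ᵥ star q) j‖ = Fintype.card ι * ‖α‖ := by
    simp only [smul_mulVec, vecMulVec_mulVec, dotProduct, Pi.star_apply, RCLike.star_def,
      mul_conj', hq]
    simp [hp, mul_comm]
  have h_error : ‖(E *ᵥ star q) j‖ ≤ Fintype.card ι * ε := by
    calc ‖(E *ᵥ star q) j‖ ≤ ∑ k, ‖E j k‖ * ‖star q k‖ := by
          simp only [mulVec, dotProduct, ← norm_mul]; exact norm_sum_le _ _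
      _ ≤ ∑ _k : ι, ε := by
          gcongr with k; simp [hq, hE]
      _ = _ := by simp
  rw [add_mulVec, Pi.add_apply]
  calc Fintype.card ι * (‖α‖ - ε)
        = ‖((α • vecMulVec p q) *ᵥ star q) j‖ - Fintype.card ι * ε := by
          rw [h_rank_one]; ring
    _ ≤ _ := by
        have h := norm_sub_norm_le (((α • vecMulVec p q) *ᵥ star q) j) (-(E *ᵥ star q) j)
        rw [sub_neg_eq_add, norm_neg] at h
        linarith

theorem re_trace_sq_div_le_of_eq_smul_vecMulVec_add {H : Matrix ι ι ℂ} {α : ℂ} {p q : ι → ℂ}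
    {E : Matrix ι ι ℂ} {ε : ℝ} (hH : H = α • vecMulVec p q + E) (hp : ∀ j, ‖p j‖ = 1)
    (hq : ∀ k, ‖q k‖ = 1) (hE : ∀ j k, ‖E j k‖ ≤ ε) (hε : ε < ‖α‖) :
    (Hᴴ * H).trace.re ^ 2 / ((Hᴴ * H)ᴴ * (Hᴴ * H)).trace.re ≤ ((‖α‖ + ε) / (‖α‖ - ε)) ^ 4 := by
  have h_entry : ∀ j k, ‖H j k‖ ≤ ‖α‖ + ε := fun j k => by
    rw [hH]
    refine (norm_add_le _ _).trans (add_le_add (le_of_eq ?_) (hE j k))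
    simp [vecMulVec_apply, hp, hq]
  have h_upper := re_trace_conjTranspose_mul_self_le H h_entry
  have h_lower := pow_four_le_re_trace_of_le_norm_mulVec H (v := star q) (by simp [hq])
    (sub_nonneg.2 hε.le) fun j => hH ▸ card_mul_sub_le_norm_mulVec_star hp hq hE j
  have h_nonneg : 0 ≤ (Hᴴ * H).trace.re := by
    rw [re_trace_conjTranspose_mul_self]
    exact sum_nonneg fun _ _ => sum_nonneg fun _ _ => sq_nonneg _
  rcases (Nat.cast_nonneg (Fintype.card ι) : (0 : ℝ) ≤ Fintype.card ι).eq_or_lt with hc0 | hc0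
  · rw [le_antisymm (by simpa [← hc0] using h_upper) h_nonneg]
    rw [zero_pow two_ne_zero, zero_div]
    positivity
  · have hB : 0 < ‖α‖ - ε := sub_pos.2 hε
    calc (Hᴴ * H).trace.re ^ 2 / ((Hᴴ * H)ᴴ * (Hᴴ * H)).trace.re
        ≤ ((Fintype.card ι : ℝ) ^ 2 * (‖α‖ + ε) ^ 2) ^ 2
            / (Fintype.card ι ^ 4 * (‖α‖ - ε) ^ 4) := by
          gcongr
      _ = ((‖α‖ + ε) / (‖α‖ - ε)) ^ 4 := by
          have := hc0.ne'
          field_simp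

end FrobeniusBounds

theorem norm_exp_I_mul_ofReal_mul_int_mul_div (x Ω : ℝ) (m : ℤ) (K : ℕ) :
    ‖exp (I * (x * (m * Ω / K)))‖ = 1 := by
  simpa using norm_exp_I_mul_ofReal (x * (m * Ω / K))

theorem Fin.abs_val_add_val_sub_le {K : ℕ} (j k : Fin (K + 1)) : |(j : ℤ) + k - K| ≤ K := by
  have := j.isLt; have := k.isLt
  rw [abs_le]; omega

theorem stmt_8_general (n : ℕ) (K : ℕ) (Ω : ℝ)
    (σ : ℝ) (y : Fin n → ℝ)
    (a : Fin n → ℂ) (s : Fin n)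
    (hdom : (∑ t ∈ Finset.univ.erase s, ‖a t‖) + σ < ‖a s‖)
    (W : ℤ → ℂ) (hW : ∀ m : ℤ, |m| ≤ (K : ℤ) → ‖W m‖ < σ)
    (H : Matrix (Fin (K + 1)) (Fin (K + 1)) ℂ)
    (hH : ∀ j k : Fin (K + 1),
      H j k = (∑ l : Fin n, a l * Complex.exp (Complex.I * (y l * ((((j : ℤ) + k - K) : ℤ) * Ω / K))))
        + W ((j : ℤ) + k - K))
    (N : Matrix (Fin (K + 1)) (Fin (K + 1)) ℂ) (hN : N = Hᴴ * H) :
    (Matrix.trace N).re ^ 2 / (Matrix.trace (Nᴴ * N)).re ≤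
      ((‖a s‖ + (∑ t ∈ Finset.univ.erase s, ‖a t‖) + σ) /
        (‖a s‖ - (∑ t ∈ Finset.univ.erase s, ‖a t‖) - σ)) ^ 4 := by
  set p : Fin (K + 1) → ℂ := fun j => exp (I * (y s * (((j : ℤ) - K : ℤ) * Ω / K)))
  set q : Fin (K + 1) → ℂ := fun k => exp (I * (y s * ((k : ℤ) * Ω / K)))
  set E : Matrix (Fin (K + 1)) (Fin (K + 1)) ℂ := Matrix.of fun j k =>
    (∑ l ∈ univ.erase s, a l * exp (I * (y l * ((((j : ℤ) + k - K) : ℤ) * Ω / K))))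
      + W ((j : ℤ) + k - K)
  have h_phase : ∀ j k : Fin (K + 1),
      exp (I * (y s * ((((j : ℤ) + k - K) : ℤ) * Ω / K))) = p j * q k := fun j k => by
    simp only [p, q, ← exp_add]
    congr 1
    push_cast; ring
  have h_split : H = a s • vecMulVec p q + E := by
    ext j k
    rw [hH, ← add_sum_erase _ _ (mem_univ s), h_phase]
    simp only [Matrix.add_apply, Matrix.smul_apply, vecMulVec_apply, smul_eq_mul, E, of_apply,
      add_assoc]
  have h_error : ∀ j k, ‖E j k‖ ≤ (∑ t ∈ univ.erase s, ‖a t‖) + σ := fun j k => by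
    simp only [E, of_apply]
    refine (norm_add_le _ _).trans (add_le_add ((norm_sum_le _ _).trans ?_)
      (hW _ (Fin.abs_val_add_val_sub_le j k)).le)
    gcongr with l
    rw [norm_mul, norm_exp_I_mul_ofReal_mul_int_mul_div, mul_one]
  subst hN
  convert re_trace_sq_div_le_of_eq_smul_vecMulVec_add h_split
    (fun j => norm_exp_I_mul_ofReal_mul_int_mul_div _ _ _ _)
    (fun k => norm_exp_I_mul_ofReal_mul_int_mul_div _ _ _ _) h_error hdom using 3 <;> ring

theorem stmt_8 (n : ℕ) (hn : 1 ≤ n) (K : ℕ) (hK : 1 ≤ K) (Ω : ℝ) (hΩ : 0 < Ω)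
    (σ : ℝ) (hσ : 0 < σ) (y : Fin n → ℝ) (hy : Function.Injective y)
    (a : Fin n → ℂ) (s : Fin n)
    (hmax : ∀ j, ‖a j‖ ≤ ‖a s‖)
    (hdom : (∑ t ∈ Finset.univ.erase s, ‖a t‖) + σ < ‖a s‖)
    (W : ℤ → ℂ) (hW : ∀ m : ℤ, |m| ≤ (K : ℤ) → ‖W m‖ < σ)
    (H : Matrix (Fin (K + 1)) (Fin (K + 1)) ℂ)
    (hH : ∀ j k : Fin (K + 1),
      H j k = (∑ l : Fin n, a l * Complex.exp (Complex.I * (y l * ((((j : ℤ) + k - K) : ℤ) * Ω / K))))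
        + W ((j : ℤ) + k - K))
    (N : Matrix (Fin (K + 1)) (Fin (K + 1)) ℂ) (hN : N = Hᴴ * H) :
    (Matrix.trace N).re ^ 2 / (Matrix.trace (Nᴴ * N)).re ≤
      ((‖a s‖ + (∑ t ∈ Finset.univ.erase s, ‖a t‖) + σ) /
        (‖a s‖ - (∑ t ∈ Finset.univ.erase s, ‖a t‖) - σ)) ^ 4 :=
  stmt_8_general n K Ω σ y a s hdom W hW H hH N hN
end

section
/- Let n ≥ 2 be an even integer, M > σ' > 0, and Ω > 0. Let y_1,…,y_n ∈ [-π/(2Ω), π/(2Ω)] with minimum separation τ = min_{p≠q}|y_p - y_q| ≥ (3.03 π e/Ω)(σ'/M)^{1/n}. If there exist complex numbers â_1,…,â_n and a point y ∈ [-π/(2Ω), π/(2Ω)] with min_j |y - y_j| ≥ τ/2 such that |∑_j â_j e^{iy_j ω} - M e^{iyω}| < σ' for all ω ∈ {mΩ/K : m = -K,…,K}, then a contradiction follows; equivalently, any such σ'-admissible approximation forces min_j |y - y_j| < τ/2. -/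
/-!
Suppose every `y j` is at distance at least `τ / 2` from `y0`. The grid `mΩ/K` contains the
`n + 1` points `k h`, `|k| ≤ n / 2`, with step `h = rΩ/K ≥ Ω/(n + 1)`; put `z j = exp (i h y j)`
and `w = exp (i h y0)`. Pairing the data at these points with the coefficients of the Laurent
polynomial `x ^ (-n/2) ∏ j, (x - z j)`, which vanishes at every `z j` and has `2 ^ n` unimodular
terms, gives `M ∏ j, |w - z j| < 2 ^ n σ'`. On the other hand `|w - z j| ≥ (2h/π) |y0 - y j|` by
Jordan's inequality, and by separation the distances on each side of `y0` are at least
`τ/2, 3τ/2, 5τ/2, …`, so `∏ j, |y0 - y j| ≥ ((n - 1)!!)² (τ/2)ⁿ`. With the assumed lower bound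
on `τ` the two estimates are incompatible, since `(2(n + 1))^(n/2) ≤ (3.03 e)^(n/2) (n - 1)!!`.
-/

open Real Complex Finset

def oddProd (m : ℕ) : ℕ := ∏ k ∈ range m, (2 * k + 1)

theorem oddProd_succ (m : ℕ) : oddProd (m + 1) = oddProd m * (2 * m + 1) := prod_range_succ _ m

theorem oddProd_succ_mul_le {a b : ℕ} (hab : a ≤ b) :
    oddProd (a + 1) * oddProd b ≤ oddProd a * oddProd (b + 1) := by
  rw [oddProd_succ, oddProd_succ, mul_right_comm, mul_assoc]
  gcongr

theorem oddProd_sq_le_mul {p q m : ℕ} (h : p + q = 2 * m) :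
    oddProd m ^ 2 ≤ oddProd p * oddProd q := by
  wlog hpq : p ≤ q generalizing p q
  · rw [mul_comm]
    exact this (by omega) (by omega)
  obtain ⟨d, rfl⟩ : ∃ d, q = m + d := ⟨q - m, by omega⟩
  induction d generalizing p with
  | zero =>
    obtain rfl : p = m := by omega
    exact (sq _).le
  | succ d ih =>
    calc oddProd m ^ 2 ≤ oddProd (p + 1) * oddProd (m + d) := ih (by omega) (by omega)
      _ ≤ oddProd p * oddProd (m + d + 1) := oddProd_succ_mul_le (by omega)

theorem one_add_two_div_pow_le_exp_one (m : ℕ) : (1 + 2 / (2 * m + 1) : ℝ) ^ m ≤ Real.exp 1 := by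
  set t : ℝ := 2 / (2 * m + 1)
  calc (1 + t) ^ m ≤ Real.exp t ^ m := by
        gcongr
        linarith [Real.add_one_le_exp t]
    _ = Real.exp (m * t) := (Real.exp_nat_mul t m).symm
    _ ≤ Real.exp 1 := by
        gcongr
        rw [mul_div_assoc', div_le_one (by positivity)]
        linarith

theorem two_mul_two_mul_add_one_pow_le (m : ℕ) :
    (2 * (2 * m + 1) : ℝ) ^ m ≤ (3.03 * Real.exp 1) ^ m * oddProd m := by
  have he := exp_one_gt_d9
  induction m with
  | zero => simp [oddProd]
  | succ m ih =>
    -- the inductive step below needs `2 (2m + 3) ≤ 3.03 (2m + 1)`, i.e. `m ≥ 2`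
    rcases lt_or_ge m 2 with hm | hm
    · interval_cases m <;> norm_num [oddProd, prod_range_succ] <;> nlinarith
    have hm' : (2 : ℝ) ≤ m := by exact_mod_cast hm
    have hsplit : (2 * (2 * m + 3) : ℝ) ^ m
        = (2 * (2 * m + 1)) ^ m * (1 + 2 / (2 * m + 1)) ^ m := by
      rw [← mul_pow]
      congr 1
      field_simp
      ring
    calc (2 * (2 * ((m + 1 : ℕ) : ℝ) + 1)) ^ (m + 1)
        = 2 * (2 * m + 3) * (2 * (2 * m + 3) : ℝ) ^ m := by push_cast; ring
      _ ≤ 2 * (2 * m + 3) * ((2 * (2 * m + 1)) ^ m * Real.exp 1) := by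
          rw [hsplit]
          gcongr
          exact one_add_two_div_pow_le_exp_one m
      _ ≤ 3.03 * (2 * m + 1) * ((3.03 * Real.exp 1) ^ m * oddProd m * Real.exp 1) := by
          gcongr ?_ * (?_ * _)
          linarith
      _ = (3.03 * Real.exp 1) ^ (m + 1) * oddProd (m + 1) := by
          rw [oddProd_succ]
          push_cast
          ring

theorem two_pow_le_div_pow_mul_oddProd_sq (m : ℕ) :
    (2 : ℝ) ^ (2 * m) ≤ (3.03 * Real.exp 1 / (2 * m + 1)) ^ (2 * m) * oddProd m ^ 2 := by
  rw [div_pow, div_mul_eq_mul_div, le_div_iff₀ (by positivity)]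
  calc (2 : ℝ) ^ (2 * m) * (2 * m + 1) ^ (2 * m) = ((2 * (2 * m + 1)) ^ m) ^ 2 := by
        rw [← mul_pow, ← pow_mul, Nat.mul_comm m 2]
    _ ≤ ((3.03 * Real.exp 1) ^ m * oddProd m) ^ 2 := by
        gcongr
        exact two_mul_two_mul_add_one_pow_le m
    _ = (3.03 * Real.exp 1) ^ (2 * m) * oddProd m ^ 2 := by ring

theorem exists_grid_step {n K : ℕ} (hn : 1 ≤ n) (hK : n ≤ K) {Ω : ℝ} (hΩ : 0 < Ω) :
    ∃ r : ℕ, r * n ≤ 2 * K ∧ Ω / (n + 1) ≤ r * Ω / K ∧ r * Ω / K ≤ Ω := by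
  set r := (2 * K + 1) / (n + 1)
  have hdiv : (n + 1) * r + (2 * K + 1) % (n + 1) = 2 * K + 1 := Nat.div_add_mod _ _
  have hmod := Nat.mod_lt (2 * K + 1) (show 0 < n + 1 by omega)
  have hr : 0 < r := Nat.div_pos (by omega) (by omega)
  have hnr : (n + 1) * r = n * r + r := by ring
  have hKr : K ≤ (n + 1) * r := by omega
  have hrK : r ≤ K := by
    calc r ≤ (2 * K + 1) / 2 := Nat.div_le_div_left (by omega) (by omega)
      _ = K := by omega
  have hK0 : (0 : ℝ) < K := by exact_mod_cast (show 0 < K by omega)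
  refine ⟨r, by rw [mul_comm]; omega, ?_, ?_⟩
  · rw [div_le_div_iff₀ (by positivity) hK0]
    have : (K : ℝ) ≤ (n + 1) * r := by exact_mod_cast hKr
    nlinarith
  · rw [div_le_iff₀ hK0]
    have : (r : ℝ) ≤ K := by exact_mod_cast hrK
    nlinarith

section Separated

variable {ι : Type*} {x : ι → ℝ} {τ : ℝ}

theorem add_le_of_separated_insert {s : Finset ι} {i : ι} (hi : i ∉ s)
    (hmax : ∀ j ∈ s, x j ≤ x i)
    (hsep : (insert i s : Set ι).Pairwise fun j k => τ ≤ |x j - x k|) :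
    ∀ j ∈ s, x j + τ ≤ x i := fun j hj => by
  have : τ ≤ |x i - x j| := hsep (Set.mem_insert i s) (Set.mem_insert_of_mem i (mem_coe.2 hj))
    (by rintro rfl; exact hi hj)
  rw [abs_of_nonneg (sub_nonneg.2 (hmax j hj))] at this
  linarith

theorem add_card_mul_le_of_separated [DecidableEq ι] (s : Finset ι) {c a : ℝ}
    (hc : ∀ i ∈ s, c ≤ x i) (hsep : (s : Set ι).Pairwise fun i j => τ ≤ |x i - x j|) (hca : c ≤ a)
    (ha : ∀ i ∈ s, x i + τ ≤ a) : c + #s * τ ≤ a := by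
  induction s using Finset.induction_on_max_value x generalizing a with
  | empty => simpa using hca
  | insert i s hi hmax ih =>
    rw [coe_insert] at hsep
    have := ih (fun j hj => hc j (mem_insert_of_mem hj)) (hsep.mono (Set.subset_insert i s))
      (hc i (mem_insert_self i s)) (add_le_of_separated_insert hi hmax hsep)
    rw [card_insert_of_notMem hi]
    push_cast
    linarith [ha i (mem_insert_self i s)]

theorem oddProd_mul_pow_le_prod_of_separated [DecidableEq ι] (s : Finset ι) (hτ : 0 ≤ τ)
    (hx : ∀ i ∈ s, τ / 2 ≤ x i) (hsep : (s : Set ι).Pairwise fun i j => τ ≤ |x i - x j|) :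
    oddProd #s * (τ / 2) ^ #s ≤ ∏ i ∈ s, x i := by
  induction s using Finset.induction_on_max_value x with
  | empty => simp [oddProd]
  | insert i s hi hmax ih =>
    rw [coe_insert] at hsep
    have hs : (s : Set ι).Pairwise fun i j => τ ≤ |x i - x j| := hsep.mono (Set.subset_insert i s)
    have hxi : τ / 2 + #s * τ ≤ x i :=
      add_card_mul_le_of_separated s (fun j hj => hx j (mem_insert_of_mem hj)) hs
        (hx i (mem_insert_self i s)) (add_le_of_separated_insert hi hmax hsep)
    have ih' := ih (fun j hj => hx j (mem_insert_of_mem hj)) hs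
    rw [card_insert_of_notMem hi, prod_insert hi, oddProd_succ]
    calc ((oddProd #s * (2 * #s + 1) : ℕ) : ℝ) * (τ / 2) ^ (#s + 1)
        = ((2 * #s + 1) * (τ / 2)) * (oddProd #s * (τ / 2) ^ #s) := by push_cast; ring
      _ ≤ x i * ∏ j ∈ s, x j := by
        gcongr
        all_goals linarith [hx i (mem_insert_self i s)]

theorem oddProd_sq_mul_pow_le_prod_abs_sub {s : Finset ι} {m : ℕ} (hs : #s = 2 * m) (x₀ : ℝ)
    (hτ : 0 ≤ τ) (hfar : ∀ i ∈ s, τ / 2 ≤ |x₀ - x i|)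
    (hsep : (s : Set ι).Pairwise fun i j => τ ≤ |x i - x j|) :
    oddProd m ^ 2 * (τ / 2) ^ (2 * m) ≤ ∏ i ∈ s, |x₀ - x i| := by
  classical
  set P := s.filter (x₀ < x ·)
  set Q := s.filter (¬ x₀ < x ·)
  have hP : oddProd #P * (τ / 2) ^ #P ≤ ∏ i ∈ P, |x₀ - x i| := by
    have habs : ∀ i ∈ P, |x₀ - x i| = x i - x₀ := fun i hi => by
      rw [abs_sub_comm, abs_of_pos (sub_pos.2 (mem_filter.1 hi).2)]
    rw [prod_congr rfl habs]
    refine oddProd_mul_pow_le_prod_of_separated P hτ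
      (fun i hi => habs i hi ▸ hfar i (mem_filter.1 hi).1) fun i hi j hj hij => ?_
    simpa only [sub_sub_sub_cancel_right] using
      hsep.mono (coe_subset.2 (filter_subset _ _)) hi hj hij
  have hQ : oddProd #Q * (τ / 2) ^ #Q ≤ ∏ i ∈ Q, |x₀ - x i| := by
    have habs : ∀ i ∈ Q, |x₀ - x i| = x₀ - x i := fun i hi =>
      abs_of_nonneg (sub_nonneg.2 (not_lt.1 (mem_filter.1 hi).2))
    rw [prod_congr rfl habs]
    refine oddProd_mul_pow_le_prod_of_separated Q hτ
      (fun i hi => habs i hi ▸ hfar i (mem_filter.1 hi).1) fun i hi j hj hij => ?_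
    simpa only [sub_sub_sub_cancel_left, abs_sub_comm] using
      hsep.mono (coe_subset.2 (filter_subset _ _)) hi hj hij
  have hcard : #P + #Q = 2 * m := by rw [card_filter_add_card_filter_not, hs]
  have hbal : (oddProd m ^ 2 : ℝ) ≤ oddProd #P * oddProd #Q := by
    exact_mod_cast oddProd_sq_le_mul hcard
  calc (oddProd m ^ 2 : ℝ) * (τ / 2) ^ (2 * m)
      ≤ oddProd #P * oddProd #Q * (τ / 2) ^ (2 * m) := by gcongr
    _ = (oddProd #P * (τ / 2) ^ #P) * (oddProd #Q * (τ / 2) ^ #Q) := by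
        rw [← hcard, pow_add]
        ring
    _ ≤ (∏ i ∈ P, |x₀ - x i|) * ∏ i ∈ Q, |x₀ - x i| := by gcongr
    _ = ∏ i ∈ s, |x₀ - x i| := prod_filter_mul_prod_filter_not s _ _

end Separated

theorem two_div_pi_mul_abs_sub_le_norm_exp_sub_exp {a b : ℝ} (hab : |a - b| ≤ π) :
    2 / π * |a - b| ≤ ‖cexp (I * a) - cexp (I * b)‖ := by
  have hfactor : cexp (I * a) - cexp (I * b) = cexp (I * b) * (cexp (I * ↑(a - b)) - 1) := by
    rw [mul_sub, ← Complex.exp_add]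
    push_cast
    ring_nf
  have hjordan := Real.mul_abs_le_abs_sin (x := (a - b) / 2) (by
    rw [abs_div, abs_two]
    linarith)
  rw [hfactor, norm_mul, norm_exp_I_mul_ofReal, one_mul, norm_exp_I_mul_ofReal_sub_one,
    norm_mul, Real.norm_eq_abs, Real.norm_eq_abs, abs_two]
  rw [abs_div, abs_two] at hjordan
  linarith

section Annihilation

variable {ι : Type*} [Fintype ι] [DecidableEq ι]

theorem sum_powerset_prod_neg_mul_zpow {K : Type*} [Field K] (z : ι → K) {x : K} (hx : x ≠ 0)
    (s : ℤ) :
    ∑ S ∈ univ.powerset, (∏ j ∈ univ \ S, -z j) * x ^ ((#S : ℤ) - s)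
      = x ^ (-s) * ∏ j, (x - z j) := by
  simp only [sub_eq_add_neg x, prod_add, mul_sum, prod_const]
  refine sum_congr rfl fun S _ => ?_
  rw [zpow_sub₀ hx, zpow_natCast, zpow_neg]
  ring

theorem norm_mul_prod_sub_lt_of_moments {s : ℕ} (hι : Fintype.card ι ≤ 2 * s) {z : ι → ℂ}
    {w : ℂ} (hz : ∀ j, ‖z j‖ = 1) (hw : ‖w‖ = 1) (a : ι → ℂ) (c : ℂ) {σ : ℝ}
    (hmom : ∀ k : ℤ, |k| ≤ s → ‖∑ j, a j * z j ^ k - c * w ^ k‖ < σ) :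
    ‖c‖ * ∏ j, ‖w - z j‖ < 2 ^ Fintype.card ι * σ := by
  set coeff : Finset ι → ℂ := fun S => ∏ j ∈ univ \ S, -z j
  set E : ℤ → ℂ := fun k => ∑ j, a j * z j ^ k - c * w ^ k
  have hz0 : ∀ j, z j ≠ 0 := fun j => norm_ne_zero_iff.1 (by simp [hz])
  have hw0 : w ≠ 0 := norm_ne_zero_iff.1 (by simp [hw])
  have hannihilate : ∑ S ∈ univ.powerset, coeff S * E (#S - s)
      = -(c * (w ^ (-(s : ℤ)) * ∏ j, (w - z j))) := by
    have hvanish : ∀ i, ∏ j, (z i - z j) = 0 := fun i => prod_eq_zero (mem_univ i) (sub_self _)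
    simp only [coeff, E, mul_sub, mul_sum, sum_sub_distrib]
    rw [sum_comm]
    simp only [mul_left_comm _ (a _), mul_left_comm _ c, ← mul_sum,
      sum_powerset_prod_neg_mul_zpow z (hz0 _), sum_powerset_prod_neg_mul_zpow z hw0, hvanish,
      mul_zero, sum_const_zero, zero_sub]
  have hcoeff : ∀ S, ‖coeff S‖ = 1 := fun S => by simp [coeff, norm_prod, hz]
  calc ‖c‖ * ∏ j, ‖w - z j‖ = ‖∑ S ∈ univ.powerset, coeff S * E (#S - s)‖ := by
        rw [hannihilate, norm_neg, norm_mul, norm_mul, norm_zpow, hw, one_zpow, one_mul,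
          norm_prod]
    _ ≤ ∑ S ∈ univ.powerset, ‖coeff S * E (#S - s)‖ := norm_sum_le _ _
    _ < ∑ S ∈ univ.powerset, σ := by
        refine sum_lt_sum_of_nonempty ⟨∅, empty_mem_powerset _⟩ fun S hS => ?_
        rw [norm_mul, hcoeff, one_mul]
        have : #S ≤ 2 * s := (card_le_univ S).trans hι
        exact hmom _ (abs_le.2 ⟨by omega, by omega⟩)
    _ = 2 ^ Fintype.card ι * σ := by simp

end Annihilation

theorem norm_sum_sub_lt_of_subgrid {ι : Type*} [Fintype ι] {K r m : ℕ} (hrm : r * m ≤ K)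
    {y : ι → ℝ} {y₀ Ω σ : ℝ} {a : ι → ℂ} {c : ℂ}
    (hadm : ∀ m : ℤ, |m| ≤ (K : ℤ) →
      ‖∑ j, a j * cexp (I * (y j * (m * Ω / K))) - c * cexp (I * (y₀ * (m * Ω / K)))‖ < σ)
    (k : ℤ) (hk : |k| ≤ m) :
    ‖∑ j, a j * cexp (I * ↑(y j * (r * Ω / K))) ^ k
      - c * cexp (I * ↑(y₀ * (r * Ω / K))) ^ k‖ < σ := by
  have hpow : ∀ t : ℝ, cexp (I * ↑(t * (r * Ω / K))) ^ k
      = cexp (I * (t * (((r * k : ℤ) : ℂ) * Ω / K))) := fun t => by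
    rw [← Complex.exp_int_mul]
    push_cast
    ring_nf
  simp only [hpow]
  refine hadm _ ?_
  rw [abs_mul, Nat.abs_cast]
  calc (r : ℤ) * |k| ≤ r * m := by gcongr
    _ ≤ K := by exact_mod_cast hrm

theorem two_pow_mul_le_mul_pow_mul_oddProd_sq {m : ℕ} {M Ω h τ x : ℝ} (hM : 0 < M)
    (hΩ : 0 < Ω) (hx : 0 ≤ x) (hh : Ω / (2 * m + 1) ≤ h)
    (hτ : 3.03 * π * Real.exp 1 / Ω * x ≤ τ) :
    2 ^ (2 * m) * (M * x ^ (2 * m)) ≤ M * ((h * τ / π) ^ (2 * m) * oddProd m ^ 2) := by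
  have hbase : 3.03 * Real.exp 1 / (2 * m + 1) * x ≤ h * τ / π :=
    calc 3.03 * Real.exp 1 / (2 * m + 1) * x
        = Ω / (2 * m + 1) * (3.03 * π * Real.exp 1 / Ω * x) / π := by field_simp
      _ ≤ h * τ / π := by
          have : 0 ≤ h := (by positivity : (0 : ℝ) ≤ Ω / (2 * m + 1)).trans hh
          gcongr
  calc 2 ^ (2 * m) * (M * x ^ (2 * m))
      ≤ M * ((3.03 * Real.exp 1 / (2 * m + 1)) ^ (2 * m) * oddProd m ^ 2 * x ^ (2 * m)) := by
        rw [mul_left_comm]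
        gcongr
        exact two_pow_le_div_pow_mul_oddProd_sq m
    _ = M * ((3.03 * Real.exp 1 / (2 * m + 1) * x) ^ (2 * m) * oddProd m ^ 2) := by ring
    _ ≤ M * ((h * τ / π) ^ (2 * m) * oddProd m ^ 2) := by
        have : 0 ≤ 3.03 * Real.exp 1 / (2 * m + 1) * x := by positivity
        gcongr

theorem mul_pow_mul_oddProd_sq_le_prod_norm_exp_sub {ι : Type*} [Fintype ι] {m : ℕ}
    (hι : Fintype.card ι = 2 * m) {y : ι → ℝ} {y₀ h τ : ℝ} (hh : 0 ≤ h) (hτ : 0 ≤ τ)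
    (hclose : ∀ j, h * |y₀ - y j| ≤ π) (hfar : ∀ j, τ / 2 ≤ |y₀ - y j|)
    (hsep : Pairwise fun i j => τ ≤ |y i - y j|) :
    (h * τ / π) ^ (2 * m) * oddProd m ^ 2
      ≤ ∏ j, ‖cexp (I * ↑(y₀ * h)) - cexp (I * ↑(y j * h))‖ := by
  have habs : ∀ j, |y₀ * h - y j * h| = h * |y₀ - y j| := fun j => by
    rw [← sub_mul, abs_mul, abs_of_nonneg hh, mul_comm]
  calc (h * τ / π) ^ (2 * m) * oddProd m ^ 2
      = (2 / π * h) ^ (2 * m) * (oddProd m ^ 2 * (τ / 2) ^ (2 * m)) := by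
        rw [show h * τ / π = 2 / π * h * (τ / 2) by ring, mul_pow]
        ring
    _ ≤ (2 / π * h) ^ (2 * m) * ∏ j, |y₀ - y j| := by
        gcongr
        exact oddProd_sq_mul_pow_le_prod_abs_sub (s := univ) (by rwa [card_univ]) y₀ hτ
          (fun j _ => hfar j) fun i _ j _ hij => hsep hij
    _ = ∏ j, 2 / π * |y₀ * h - y j * h| := by
        simp only [habs, mul_left_comm (2 / π), prod_mul_distrib, prod_const, card_univ, hι]
        ring
    _ ≤ ∏ j, ‖cexp (I * ↑(y₀ * h)) - cexp (I * ↑(y j * h))‖ := by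
        gcongr with j
        exact two_div_pi_mul_abs_sub_le_norm_exp_sub_exp (habs j ▸ hclose j)

theorem stmt_12 (n : ℕ) (hn : 2 ≤ n) (hneven : Even n)
    (M σ' Ω : ℝ) (hσ' : 0 < σ') (hσ'M : σ' < M) (hΩ : 0 < Ω)
    (K : ℕ) (hK : n ≤ K)
    (y : Fin n → ℝ) (hy : ∀ j, y j ∈ Set.Icc (-(π / (2 * Ω))) (π / (2 * Ω)))
    (τ : ℝ) (hτleast : IsLeast {r : ℝ | ∃ p q : Fin n, p ≠ q ∧ r = |y p - y q|} τ)
    (hτ : 3.03 * π * Real.exp 1 / Ω * (σ' / M) ^ ((1 : ℝ) / n) ≤ τ)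
    (ahat : Fin n → ℂ) (y0 : ℝ) (hy0 : y0 ∈ Set.Icc (-(π / (2 * Ω))) (π / (2 * Ω)))
    (hadm : ∀ m : ℤ, |m| ≤ (K : ℤ) →
      ‖(∑ j : Fin n, ahat j * Complex.exp (Complex.I * (y j * (m * Ω / K))))
        - M * Complex.exp (Complex.I * (y0 * (m * Ω / K)))‖ < σ') :
    ∃ j : Fin n, |y0 - y j| < τ / 2 := by
  by_contra! hfar
  obtain ⟨m, rfl⟩ := hneven.two_dvd
  have hM : 0 < M := hσ'.trans hσ'M
  set x : ℝ := (σ' / M) ^ ((1 : ℝ) / ↑(2 * m))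
  have hσ'x : σ' = M * x ^ (2 * m) := by
    rw [← Real.rpow_natCast, ← Real.rpow_mul (by positivity),
      one_div_mul_cancel (by positivity), Real.rpow_one]
    field_simp
  obtain ⟨r, hrm, hh_lower, hh_upper⟩ := exists_grid_step (by omega : 1 ≤ 2 * m) hK hΩ
  push_cast at hh_lower
  have hupper := norm_mul_prod_sub_lt_of_moments (s := m) (by simp)
    (fun j => norm_exp_I_mul_ofReal _) (norm_exp_I_mul_ofReal _) ahat M
    (norm_sum_sub_lt_of_subgrid (r := r) (by nlinarith) hadm)
  set h : ℝ := r * Ω / K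
  have hh : 0 < h := (by positivity : (0 : ℝ) < Ω / (2 * m + 1)).trans_le hh_lower
  have hclose : ∀ j, h * |y0 - y j| ≤ π := fun j => by
    have hdist := Real.dist_le_of_mem_Icc hy0 (hy j)
    rw [Real.dist_eq, sub_neg_eq_add] at hdist
    calc h * |y0 - y j| ≤ Ω * (π / (2 * Ω) + π / (2 * Ω)) := by gcongr
      _ = π := by field_simp; ring
  have hlower := mul_pow_mul_oddProd_sq_le_prod_norm_exp_sub (m := m) (by simp) hh.le
    ((by positivity : (0 : ℝ) ≤ 3.03 * π * Real.exp 1 / Ω * x).trans hτ) hclose hfar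
    fun p q hpq => hτleast.2 ⟨p, q, hpq, rfl⟩
  have hnum := two_pow_mul_le_mul_pow_mul_oddProd_sq hM hΩ (by positivity) hh_lower hτ
  rw [Fintype.card_fin, norm_real, Real.norm_of_nonneg hM.le, hσ'x] at hupper
  linarith [mul_le_mul_of_nonneg_left hlower hM.le]
end

section
/- Let M > σ' > 0, Ω > 0, and y ∈ [-π/(2Ω), π/(2Ω)]. If there exist a ∈ ℂ and z ∈ [-π/(2Ω), π/(2Ω)] such that |a e^{izω} - M e^{iyω}| < σ' for both ω = -Ω and ω = 0, then |z - y| < (π/Ω)(σ'/M). -/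
/-!
Comparing the two measurements eliminates the unknown amplitude: since `|e^{izω}| = 1`,
`M |e^{-izΩ} - e^{-iyΩ}| ≤ |a e^{-izΩ} - M e^{-iyΩ}| + |a - M| < 2σ'`. The chord length
`|e^{-izΩ} - e^{-iyΩ}| = 2 |sin (Ω (z - y) / 2)|` is at least `(2/π) Ω |z - y|` by Jordan's
inequality, which applies because `Ω |z - y| ≤ π` for `y, z ∈ [-π/(2Ω), π/(2Ω)]`.
-/

open Real Complex

lemma norm_mul_sub_le_norm_sub_add {R : Type*} [SeminormedRing R] (a c u v : R) :
    ‖c * (u - v)‖ ≤ ‖a * u - c * v‖ + ‖a - c‖ * ‖u‖ := by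
  calc ‖c * (u - v)‖ = ‖(a * u - c * v) - (a - c) * u‖ := by noncomm_ring
    _ ≤ ‖a * u - c * v‖ + ‖(a - c) * u‖ := norm_sub_le _ _
    _ ≤ ‖a * u - c * v‖ + ‖a - c‖ * ‖u‖ := by gcongr; exact norm_mul_le _ _

namespace Complex

lemma norm_exp_I_mul_ofReal_sub_exp (s t : ℝ) :
    ‖exp (I * s) - exp (I * t)‖ = ‖2 * Real.sin ((s - t) / 2)‖ := by
  have : exp (I * s) - exp (I * t) = exp (I * t) * (exp (I * ↑(s - t)) - 1) := by
    rw [mul_sub, mul_one, ← exp_add]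
    push_cast
    ring_nf
  rw [this, norm_mul, norm_exp_I_mul_ofReal, one_mul, norm_exp_I_mul_ofReal_sub_one]

lemma mul_abs_sub_le_norm_exp_I_mul_sub {s t : ℝ} (hst : |s - t| ≤ π) :
    2 / π * |s - t| ≤ ‖exp (I * s) - exp (I * t)‖ := by
  have hhalf : |(s - t) / 2| ≤ π / 2 := by
    rw [abs_div, abs_two]
    linarith
  rw [norm_exp_I_mul_ofReal_sub_exp, norm_mul, Real.norm_eq_abs, Real.norm_eq_abs, abs_two]
  calc 2 / π * |s - t| = 2 * (2 / π * |(s - t) / 2|) := by rw [abs_div, abs_two]; ring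
    _ ≤ 2 * |Real.sin ((s - t) / 2)| := by gcongr; exact mul_abs_le_abs_sin hhalf

end Complex

lemma abs_sub_le_of_mem_Icc {x y r : ℝ} (hx : x ∈ Set.Icc (-r) r) (hy : y ∈ Set.Icc (-r) r) :
    |x - y| ≤ 2 * r := by
  rw [abs_sub_le_iff]
  constructor <;> linarith [hx.1, hx.2, hy.1, hy.2]

theorem stmt_13 (M σ' Ω : ℝ) (hσ' : 0 < σ') (hσ'M : σ' < M) (hΩ : 0 < Ω)
    (y : ℝ) (hy : y ∈ Set.Icc (-(π / (2 * Ω))) (π / (2 * Ω)))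
    (a : ℂ) (z : ℝ) (hz : z ∈ Set.Icc (-(π / (2 * Ω))) (π / (2 * Ω)))
    (h1 : ‖a * Complex.exp (Complex.I * (z * (-Ω)))
      - M * Complex.exp (Complex.I * (y * (-Ω)))‖ < σ')
    (h2 : ‖a - M‖ < σ') :
    |z - y| < (π / Ω) * (σ' / M) := by
  have hM : 0 < M := hσ'.trans hσ'M
  have hphase : |z * -Ω - y * -Ω| = Ω * |z - y| := by
    rw [← sub_mul, abs_mul, abs_neg, abs_of_pos hΩ, mul_comm]
  have hzy : Ω * |z - y| ≤ π :=
    calc Ω * |z - y| ≤ Ω * (2 * (π / (2 * Ω))) := by gcongr; exact abs_sub_le_of_mem_Icc hz hy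
      _ = π := by field_simp
  have hunit : ‖exp (I * (z * -Ω : ℂ))‖ = 1 := by
    exact_mod_cast norm_exp_I_mul_ofReal (z * -Ω)
  have hchord : 2 / π * (Ω * |z - y|) ≤ ‖exp (I * (z * -Ω : ℂ)) - exp (I * (y * -Ω : ℂ))‖ := by
    have := mul_abs_sub_le_norm_exp_I_mul_sub (hphase.trans_le hzy)
    push_cast at this
    rwa [hphase] at this
  have hsplit := norm_mul_sub_le_norm_sub_add a (M : ℂ)
    (exp (I * (z * -Ω : ℂ))) (exp (I * (y * -Ω : ℂ)))
  rw [norm_mul, norm_real, Real.norm_eq_abs, abs_of_pos hM, hunit, mul_one] at hsplit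
  have hbound : M * (2 / π * (Ω * |z - y|)) < 2 * σ' :=
    calc M * (2 / π * (Ω * |z - y|))
        ≤ M * ‖exp (I * (z * -Ω : ℂ)) - exp (I * (y * -Ω : ℂ))‖ := by gcongr
      _ ≤ _ := hsplit
      _ < 2 * σ' := by linarith
  rw [div_mul_div_comm, lt_div_iff₀ (by positivity)]
  field_simp at hbound
  linarith
end

section
/- Let y_1,…,y_{2p+1} be real numbers with |y_j| ≤ pτ for all j, let a_1,…,a_{2p+1} be complex numbers with ∑_j |a_j| ≤ (2p+1)2^{2p}M and ∑_j a_j y_j^k = 0 for k = 0,…,2p-1. Then for every ω with |ω| ≤ Ω and τΩ ≤ 1, |∑_j a_j e^{iy_jω}| ≤ ((2p+1)M/(2√(πp))) (eτΩ)^{2p} e^{p}. -/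
open Real Complex Finset
open scoped Nat

/-!
Expanding each exponential in its Taylor series, the vanishing moments annihilate all terms of
order below `2p`, so the sum equals `∑ a_j (e^{z_j} - T_{2p}(z_j))` with `z_j = i y_j ω` and
`T_{2p}` the Taylor polynomial of degree `2p - 1`. The remainder is at most
`|z|^{2p} / (2p)! · e^{|z|}` with `|z| ≤ pτΩ ≤ p`, and Stirling's lower bound for `(2p)!` turns
`p^{2p} / (2p)!` into `(e/2)^{2p} / (2√(πp))`.
-/

theorem Real.exp_sub_sum_range_le {x : ℝ} (hx : 0 ≤ x) (n : ℕ) :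
    Real.exp x - ∑ m ∈ range n, x ^ m / m ! ≤ x ^ n / n ! * Real.exp x := by
  have hs : HasSum (fun m => x ^ m / m !) (Real.exp x) := by
    simpa [Real.exp_eq_exp_ℝ] using NormedSpace.expSeries_div_hasSum_exp x
  have htail : Real.exp x - ∑ m ∈ range n, x ^ m / m ! = ∑' i, x ^ (i + n) / (i + n)! := by
    rw [← hs.tsum_eq, ← hs.summable.sum_add_tsum_nat_add n, add_sub_cancel_left]
  rw [htail, ← hs.tsum_eq, ← tsum_mul_left]
  refine (hs.summable.comp_injective (add_left_injective n)).tsum_le_tsum (fun i => ?_)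
    (hs.summable.mul_left _)
  have hfac : (n ! * i ! : ℝ) ≤ (i + n)! := by
    exact_mod_cast Nat.le_of_dvd (Nat.factorial_pos _)
      (by simpa [mul_comm] using Nat.factorial_mul_factorial_dvd_factorial_add i n)
  calc x ^ (i + n) / (i + n)! ≤ x ^ (i + n) / (n ! * i !) := by gcongr
    _ = x ^ n / n ! * (x ^ i / i !) := by rw [pow_add]; field_simp

theorem Complex.norm_exp_sub_sum_range_le (z : ℂ) (n : ℕ) :
    ‖Complex.exp z - ∑ m ∈ range n, z ^ m / (m ! : ℂ)‖ ≤ ‖z‖ ^ n / n ! * Real.exp ‖z‖ :=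
  (norm_exp_sub_sum_le_exp_norm_sub_sum z n).trans (Real.exp_sub_sum_range_le (norm_nonneg z) n)

section Moments

variable {ι : Type*} [Fintype ι] (a y : ι → ℂ) {n : ℕ}

theorem sum_mul_exp_eq_sum_mul_exp_sub_sum_range
    (hmom : ∀ k < n, ∑ j, a j * y j ^ k = 0) (c : ℂ) :
    ∑ j, a j * Complex.exp (c * y j) =
      ∑ j, a j * (Complex.exp (c * y j) - ∑ m ∈ range n, (c * y j) ^ m / m !) := by
  have htaylor : ∑ j, a j * ∑ m ∈ range n, (c * y j) ^ m / m ! = 0 := by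
    calc ∑ j, a j * ∑ m ∈ range n, (c * y j) ^ m / m !
        = ∑ m ∈ range n, c ^ m / m ! * ∑ j, a j * y j ^ m := by
          simp only [mul_sum]
          rw [sum_comm]
          refine sum_congr rfl fun m _ => sum_congr rfl fun j _ => ?_
          ring
      _ = 0 := sum_eq_zero fun m hm => by rw [hmom m (mem_range.mp hm), mul_zero]
  simp only [mul_sub, sum_sub_distrib, htaylor, sub_zero]

theorem norm_sum_mul_exp_le_of_moments_eq_zero
    (hmom : ∀ k < n, ∑ j, a j * y j ^ k = 0) (c : ℂ) {r : ℝ} (hr : ∀ j, ‖c * y j‖ ≤ r) :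
    ‖∑ j, a j * Complex.exp (c * y j)‖ ≤ (∑ j, ‖a j‖) * (r ^ n / n ! * Real.exp r) := by
  rw [sum_mul_exp_eq_sum_mul_exp_sub_sum_range a y hmom, sum_mul]
  refine (norm_sum_le _ _).trans (sum_le_sum fun j _ => ?_)
  have hr0 : 0 ≤ r := (norm_nonneg _).trans (hr j)
  rw [norm_mul]
  gcongr
  refine (Complex.norm_exp_sub_sum_range_le _ n).trans ?_
  gcongr <;> exact hr j

end Moments

theorem pow_two_mul_div_factorial_le {p : ℕ} (hp : p ≠ 0) :
    (p : ℝ) ^ (2 * p) / (2 * p)! ≤ (Real.exp 1 / 2) ^ (2 * p) / (2 * √(π * p)) := by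
  have hstirling := Stirling.le_factorial_stirling (2 * p)
  have hsqrt : √(2 * π * ((2 * p : ℕ) : ℝ)) = 2 * √(π * p) := by
    rw [show 2 * π * ((2 * p : ℕ) : ℝ) = 2 ^ 2 * (π * p) by push_cast; ring,
      Real.sqrt_mul (by positivity), Real.sqrt_sq (by norm_num)]
  have : 0 < √(π * p) := Real.sqrt_pos.mpr (by positivity)
  rw [div_le_div_iff₀ (by positivity) (by positivity)]
  calc (p : ℝ) ^ (2 * p) * (2 * √(π * p))
      = (Real.exp 1 / 2) ^ (2 * p) * (√(2 * π * ((2 * p : ℕ) : ℝ)) *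
          (((2 * p : ℕ) : ℝ) / Real.exp 1) ^ (2 * p)) := by
        rw [hsqrt, div_pow, div_pow]; push_cast; field_simp; ring
    _ ≤ (Real.exp 1 / 2) ^ (2 * p) * (2 * p)! := by gcongr

theorem stmt_17_general (p : ℕ) (hp : 1 ≤ p) (τ M Ω : ℝ) (hτ : 0 ≤ τ)
    (hτΩ : τ * Ω ≤ 1)
    (y : Fin (2 * p + 1) → ℝ) (hy : ∀ j, |y j| ≤ p * τ)
    (a : Fin (2 * p + 1) → ℂ)
    (hsum : ∑ j : Fin (2 * p + 1), ‖a j‖ ≤ (2 * p + 1) * 2 ^ (2 * p) * M)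
    (hmom : ∀ k : ℕ, k ≤ 2 * p - 1 → ∑ j : Fin (2 * p + 1), a j * (y j : ℂ) ^ k = 0)
    (ω : ℝ) (hω : |ω| ≤ Ω) :
    ‖∑ j : Fin (2 * p + 1), a j * Complex.exp (Complex.I * (y j * ω))‖ ≤
      ((2 * p + 1) * M / (2 * Real.sqrt (π * p))) * (Real.exp 1 * τ * Ω) ^ (2 * p) *
        Real.exp p := by
  have hz : ∀ j, ‖I * ω * (y j : ℂ)‖ ≤ p * (τ * Ω) := fun j => by
    simp only [norm_mul, Complex.norm_I, one_mul, Complex.norm_real, Real.norm_eq_abs]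
    rw [mul_comm, ← mul_assoc]
    exact mul_le_mul (hy j) hω (abs_nonneg _) (by positivity)
  have hbound := norm_sum_mul_exp_le_of_moments_eq_zero a (fun j => (y j : ℂ)) (n := 2 * p)
    (fun k hk => hmom k (by omega)) (I * ω) hz
  have hM : 0 ≤ (2 * p + 1) * 2 ^ (2 * p) * M :=
    (sum_nonneg fun j _ => norm_nonneg (a j)).trans hsum
  have hτΩ0 : 0 ≤ τ * Ω := mul_nonneg hτ ((abs_nonneg ω).trans hω)
  have hpτΩ : p * (τ * Ω) ≤ p := mul_le_of_le_one_right (Nat.cast_nonneg p) hτΩ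
  calc ‖∑ j, a j * Complex.exp (I * (y j * ω))‖
      = ‖∑ j, a j * Complex.exp (I * ω * y j)‖ := by simp only [mul_comm (y _ : ℂ), mul_assoc]
    _ ≤ (∑ j, ‖a j‖) * ((p * (τ * Ω)) ^ (2 * p) / (2 * p)! * Real.exp (p * (τ * Ω))) := hbound
    _ ≤ (2 * p + 1) * 2 ^ (2 * p) * M *
          ((p : ℝ) ^ (2 * p) / (2 * p)! * (τ * Ω) ^ (2 * p) * Real.exp p) := by
        rw [mul_pow, mul_div_right_comm]
        gcongr
    _ ≤ (2 * p + 1) * 2 ^ (2 * p) * M *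
          ((Real.exp 1 / 2) ^ (2 * p) / (2 * √(π * p)) * (τ * Ω) ^ (2 * p) * Real.exp p) := by
        gcongr _ * (?_ * _ * _)
        exact pow_two_mul_div_factorial_le (Nat.one_le_iff_ne_zero.mp hp)
    _ = ((2 * p + 1) * M / (2 * Real.sqrt (π * p))) * (Real.exp 1 * τ * Ω) ^ (2 * p) *
          Real.exp p := by
        rw [div_pow, mul_assoc (Real.exp 1), mul_pow (Real.exp 1)]
        field_simp

theorem stmt_17 (p : ℕ) (hp : 1 ≤ p) (τ M Ω : ℝ) (hτ : 0 ≤ τ) (hΩ : 0 < Ω)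
    (hτΩ : τ * Ω ≤ 1)
    (y : Fin (2 * p + 1) → ℝ) (hy : ∀ j, |y j| ≤ p * τ)
    (a : Fin (2 * p + 1) → ℂ)
    (hsum : ∑ j : Fin (2 * p + 1), ‖a j‖ ≤ (2 * p + 1) * 2 ^ (2 * p) * M)
    (hmom : ∀ k : ℕ, k ≤ 2 * p - 1 → ∑ j : Fin (2 * p + 1), a j * (y j : ℂ) ^ k = 0)
    (ω : ℝ) (hω : |ω| ≤ Ω) :
    ‖∑ j : Fin (2 * p + 1), a j * Complex.exp (Complex.I * (y j * ω))‖ ≤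
      ((2 * p + 1) * M / (2 * Real.sqrt (π * p))) * (Real.exp 1 * τ * Ω) ^ (2 * p) *
        Real.exp p :=
  stmt_17_general p hp τ M Ω hτ hτΩ y hy a hsum hmom ω hω
end

section
/- Let n ≥ 2, p = n/2 with n even, 0 < σ' < M, Ω > 0, and τ = (0.96 e^{-3/2}/Ω)(σ'/M)^{1/n}. Then there exist equally spaced points y_1,…,y_{n+1} with spacing τ, an index k, and complex amplitudes â_j (j ≠ k) such that the measure μ̂ = ∑_{j≠k} â_j δ_{y_j} satisfies |∑_{j≠k} â_j e^{iy_jω} - M e^{iy_kω}| < σ' for all ω ∈ [-Ω, Ω]. -/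
/-!
Take the weights of the `n`-th finite difference, `a_j = -M (-1)^j (n choose j)` at the points
`y_j = j τ`, and drop the point `y_0`, where `a_0 = -M`. With `z = e^{iτω}` the error is
`-M (1 - z)^n`, and `|1 - z| ≤ τ|ω| ≤ τΩ = 0.96 e^{-3/2} (σ'/M)^{1/n}`, so the error is at most
`(0.96 e^{-3/2})^n σ' < σ'`.
-/

open Real Complex Finset

lemma sum_erase_zero_choose_mul_pow_sub {R : Type*} [CommRing R] (n : ℕ) (m z : R) :
    ∑ j ∈ univ.erase (0 : Fin (n + 1)), -m * (-1) ^ (j : ℕ) * n.choose j * z ^ (j : ℕ) - m =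
      -m * (1 - z) ^ n := by
  have hbinom : ∑ j : Fin (n + 1), -m * (-1) ^ (j : ℕ) * n.choose j * z ^ (j : ℕ) =
      -m * (1 - z) ^ n := by
    rw [Fin.sum_univ_eq_sum_range (fun j => -m * (-1) ^ j * n.choose j * z ^ j),
      sub_eq_neg_add, add_pow, mul_sum]
    refine sum_congr rfl fun j _ => ?_
    rw [neg_pow]
    ring
  rw [← hbinom, ← add_sum_erase _ _ (mem_univ 0)]
  simp only [Fin.val_zero, pow_zero, Nat.choose_zero_right, Nat.cast_one]
  ring

theorem stmt_18_general (n : ℕ) (hn : 2 ≤ n)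
    (M σ' Ω : ℝ) (hσ' : 0 < σ') (hσ'M : σ' < M) (hΩ : 0 < Ω)
    (τ : ℝ) (hτ : τ = 0.96 * Real.exp (-(3 / 2 : ℝ)) / Ω * (σ' / M) ^ ((1 : ℝ) / n)) :
    ∃ (y0 : ℝ) (k : Fin (n + 1)) (ahat : Fin (n + 1) → ℂ),
      ∀ ω : ℝ, ω ∈ Set.Icc (-Ω) Ω →
        ‖(∑ j ∈ Finset.univ.erase k,
            ahat j * Complex.exp (Complex.I * ((y0 + (j : ℕ) * τ) * ω)))
          - M * Complex.exp (Complex.I * ((y0 + (k : ℕ) * τ) * ω))‖ < σ' := by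
  have hM : 0 < M := hσ'.trans hσ'M
  have hc : 0.96 * Real.exp (-(3 / 2 : ℝ)) < 1 := by
    have : Real.exp (-(3 / 2 : ℝ)) < 1 := Real.exp_lt_one_iff.mpr (by norm_num)
    linarith
  have hrn : ((σ' / M) ^ ((1 : ℝ) / n)) ^ n = σ' / M := by
    rw [one_div]
    exact Real.rpow_inv_natCast_pow (by positivity) (by omega)
  have hτ0 : 0 ≤ τ := by rw [hτ]; positivity
  set c : ℝ := 0.96 * Real.exp (-(3 / 2 : ℝ))
  set r : ℝ := (σ' / M) ^ ((1 : ℝ) / n)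
  refine ⟨0, 0, fun j => -(M : ℂ) * (-1) ^ (j : ℕ) * n.choose j, fun ω hω => ?_⟩
  set z := Complex.exp (Complex.I * (τ * ω : ℝ))
  have hpow (j : ℕ) : Complex.exp (Complex.I * (((0 : ℝ) + (j : ℂ) * τ) * ω)) = z ^ j := by
    rw [← Complex.exp_nat_mul]
    push_cast
    ring_nf
  have hz : ‖1 - z‖ ≤ c * r := calc
    ‖1 - z‖ ≤ ‖τ * ω‖ := by rw [norm_sub_rev]; exact Real.norm_exp_I_mul_ofReal_sub_one_le
    _ ≤ τ * Ω := by
      rw [norm_mul, Real.norm_of_nonneg hτ0]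
      exact mul_le_mul_of_nonneg_left (abs_le.mpr hω) hτ0
    _ = c * r := by rw [hτ]; field_simp
  simp only [hpow, Fin.val_zero, pow_zero, mul_one, sum_erase_zero_choose_mul_pow_sub]
  calc ‖-(M : ℂ) * (1 - z) ^ n‖ = M * ‖1 - z‖ ^ n := by
        rw [norm_mul, norm_pow, norm_neg, Complex.norm_real, Real.norm_of_nonneg hM.le]
    _ ≤ M * (c * r) ^ n := by gcongr
    _ = c ^ n * σ' := by rw [mul_pow, hrn]; field_simp
    _ < σ' := mul_lt_of_lt_one_left hσ' (pow_lt_one₀ (by positivity) hc (by omega))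

theorem stmt_18 (n : ℕ) (hn : 2 ≤ n) (hneven : Even n)
    (M σ' Ω : ℝ) (hσ' : 0 < σ') (hσ'M : σ' < M) (hΩ : 0 < Ω)
    (τ : ℝ) (hτ : τ = 0.96 * Real.exp (-(3 / 2 : ℝ)) / Ω * (σ' / M) ^ ((1 : ℝ) / n)) :
    ∃ (y0 : ℝ) (k : Fin (n + 1)) (ahat : Fin (n + 1) → ℂ),
      ∀ ω : ℝ, ω ∈ Set.Icc (-Ω) Ω →
        ‖(∑ j ∈ Finset.univ.erase k,
            ahat j * Complex.exp (Complex.I * ((y0 + (j : ℕ) * τ) * ω)))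
          - M * Complex.exp (Complex.I * ((y0 + (k : ℕ) * τ) * ω))‖ < σ' :=
  stmt_18_general n hn M σ' Ω hσ' hσ'M hΩ τ hτ
end

section
/- Let θ_1,…,θ_n ∈ [-π/2, π/2] be distinct with minimum separation τ', let θ ∈ [-π/2, π/2] with min_j |θ - θ_j| ≥ τ'/2, and let M > 0. Then for all complex â_1,…,â_n, ‖∑_{j=1}^n â_j φ_n(e^{iθ_j}) - M φ_n(e^{iθ})‖_2 ≥ (M/π^n) ∏_{j=1}^n |θ - θ_j| ≥ (M/π^n)(τ'/2)^n (n-1)!, where φ_n(ω) = (1, ω, ω², …, ω^n)^⊤ ∈ ℂ^{n+1}. -/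
/-!
With `ω_j = e^{iθ_j}` and `p = ∏ (X - ω_j)`, pairing the residual vector
`∑ â_j φ_n(ω_j) - M φ_n(e^{iθ})` with the coefficient vector of `p` kills every column `φ_n(ω_j)`
and leaves `-M p(e^{iθ})`. By Cauchy–Schwarz, `M ∏ |e^{iθ} - ω_j|` is at most the `ℓ²`-norm of the
residual times `∑ |coeff p| ≤ 2^n` (the roots lie on the unit circle, so `p` has Mahler measure `1`
and Mignotte's bound controls its coefficients by binomials). Chords satisfy
`|e^{ia} - e^{ib}| ≥ (2/π)|a - b|` when `|a - b| ≤ π`.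

For the product, remove the node farthest from `θ`, at distance `r`: all `k + 1` nodes are
`τ'`-separated inside `[θ - r, θ + r]`, so `r ≥ k τ'/2`, and induction gives `(τ'/2)^n (n-1)!`.
-/

open Real Complex Finset Polynomial

theorem Polynomial.sum_norm_coeff_le_two_pow_mul_mahlerMeasure (p : ℂ[X]) :
    ∑ i ∈ range (p.natDegree + 1), ‖p.coeff i‖ ≤ 2 ^ p.natDegree * p.mahlerMeasure := by
  calc ∑ i ∈ range (p.natDegree + 1), ‖p.coeff i‖
      ≤ ∑ i ∈ range (p.natDegree + 1), (p.natDegree.choose i : ℝ) * p.mahlerMeasure :=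
        sum_le_sum fun i _ => p.norm_coeff_le_choose_mul_mahlerMeasure i
    _ = 2 ^ p.natDegree * p.mahlerMeasure := by
        rw [← sum_mul, ← Nat.cast_sum, Nat.sum_range_choose]; push_cast; rfl

theorem Polynomial.mahlerMeasure_prod_X_sub_C {ι : Type*} (s : Finset ι) (ω : ι → ℂ) :
    (∏ j ∈ s, (X - C (ω j))).mahlerMeasure = ∏ j ∈ s, max 1 ‖ω j‖ := by
  rw [prod_eq_multiset_prod, prod_mahlerMeasure_eq_mahlerMeasure_prod, Multiset.map_map]
  simp only [Function.comp_def, mahlerMeasure_X_sub_C]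
  rfl

theorem norm_exp_I_mul_sub_exp_I_mul (a b : ℝ) :
    ‖exp (I * a) - exp (I * b)‖ = ‖exp (I * (a - b : ℝ)) - 1‖ := by
  have h : exp (I * a) - exp (I * b) = exp (I * b) * (exp (I * (a - b : ℝ)) - 1) := by
    rw [mul_sub, ← Complex.exp_add, mul_one]; push_cast; ring_nf
  rw [h, norm_mul, mul_comm I, Complex.norm_exp_ofReal_mul_I, one_mul]

theorem mul_abs_le_norm_exp_I_mul_sub_exp_I_mul {a b : ℝ} (h : |a - b| ≤ π) :
    2 / π * |a - b| ≤ ‖exp (I * a) - exp (I * b)‖ := by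
  have hhalf : |(a - b) / 2| ≤ π / 2 := by rw [abs_div, abs_two]; linarith
  rw [norm_exp_I_mul_sub_exp_I_mul, norm_exp_I_mul_ofReal_sub_one, norm_mul, Real.norm_two,
    Real.norm_eq_abs]
  calc 2 / π * |a - b| = 2 * (2 / π * |(a - b) / 2|) := by rw [abs_div, abs_two]; ring
    _ ≤ 2 * |Real.sin ((a - b) / 2)| := by gcongr; exact mul_abs_le_abs_sin hhalf

theorem norm_mul_eval_le_sum_norm_coeff_mul_sqrt {ι : Type*} [Fintype ι] (N : ℕ) (p : ℂ[X])
    (hp : p.natDegree ≤ N) (ω : ι → ℂ) (hroot : ∀ j, p.IsRoot (ω j)) (a : ι → ℂ) (c z : ℂ) :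
    ‖c * p.eval z‖ ≤ (∑ i ∈ range (N + 1), ‖p.coeff i‖) *
      √(∑ i : Fin (N + 1), ‖∑ j, a j * ω j ^ (i : ℕ) - c * z ^ (i : ℕ)‖ ^ 2) := by
  have heval (x : ℂ) : p.eval x = ∑ i : Fin (N + 1), p.coeff i * x ^ (i : ℕ) := by
    rw [eval_eq_sum_range' (Nat.lt_succ_of_le hp),
      Fin.sum_univ_eq_sum_range (fun i => p.coeff i * x ^ i)]
  set v : Fin (N + 1) → ℂ := fun i => ∑ j, a j * ω j ^ (i : ℕ) - c * z ^ (i : ℕ)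
  have hpair : ∑ i : Fin (N + 1), p.coeff i * v i = -(c * p.eval z) := by
    have hcol (j : ι) : ∑ i : Fin (N + 1), p.coeff i * (a j * ω j ^ (i : ℕ)) = 0 := by
      simp_rw [mul_left_comm _ (a j), ← mul_sum, ← heval, (hroot j).eq_zero, mul_zero]
    simp only [v, mul_sub, sum_sub_distrib, mul_sum]
    rw [sum_comm, sum_eq_zero fun j _ => hcol j, heval, mul_sum]
    simp_rw [mul_left_comm c]
    ring
  calc ‖c * p.eval z‖ = ‖∑ i : Fin (N + 1), p.coeff i * v i‖ := by rw [hpair, norm_neg]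
    _ ≤ ∑ i : Fin (N + 1), ‖p.coeff i‖ * ‖v i‖ :=
        (norm_sum_le _ _).trans_eq (by simp_rw [norm_mul])
    _ ≤ √(∑ i : Fin (N + 1), ‖p.coeff i‖ ^ 2) * √(∑ i, ‖v i‖ ^ 2) :=
        Real.sum_mul_le_sqrt_mul_sqrt _ _ _
    _ ≤ (∑ i ∈ range (N + 1), ‖p.coeff i‖) * √(∑ i, ‖v i‖ ^ 2) := by
        gcongr
        rw [← Fin.sum_univ_eq_sum_range (fun i => ‖p.coeff i‖), Real.sqrt_le_left]
        · exact sum_sq_le_sq_sum_of_nonneg fun i _ => norm_nonneg _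
        · positivity

theorem mul_card_sub_one_le_of_separated {ι : Type*} (s : Finset ι) (x : ι → ℝ) {δ lo hi : ℝ}
    (hs : s.Nonempty) (hx : ∀ i ∈ s, x i ∈ Set.Icc lo hi)
    (hsep : ∀ i ∈ s, ∀ j ∈ s, i ≠ j → δ ≤ |x i - x j|) :
    δ * (#s - 1 : ℝ) ≤ hi - lo := by
  classical
  induction s using Finset.induction_on_max_value x generalizing hi with
  | empty => simp at hs
  | insert a s ha hmax ih =>
    have hxa := hx a (mem_insert_self a s)
    rcases s.eq_empty_or_nonempty with rfl | hs'
    · simp [hxa.1.trans hxa.2]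
    have hbelow : δ * (#s - 1 : ℝ) ≤ x a - δ - lo := by
      refine ih hs' (fun i hi => ⟨(hx i (mem_insert_of_mem hi)).1, ?_⟩)
        fun i hi j hj => hsep i (mem_insert_of_mem hi) j (mem_insert_of_mem hj)
      have h := hsep a (mem_insert_self a s) i (mem_insert_of_mem hi) (by rintro rfl; exact ha hi)
      rw [abs_of_nonneg (sub_nonneg.2 (hmax i hi))] at h
      linarith
    rw [card_insert_of_notMem ha]
    push_cast
    linarith [hxa.2]

theorem pow_mul_factorial_le_prod_abs_sub {ι : Type*} (s : Finset ι) (x : ι → ℝ) (x₀ : ℝ)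
    {δ : ℝ} (hδ : 0 ≤ δ) (hfar : ∀ i ∈ s, δ / 2 ≤ |x₀ - x i|)
    (hsep : ∀ i ∈ s, ∀ j ∈ s, i ≠ j → δ ≤ |x i - x j|) :
    (δ / 2) ^ #s * (#s - 1).factorial ≤ ∏ i ∈ s, |x₀ - x i| := by
  classical
  induction s using Finset.induction_on_max_value (fun i => |x₀ - x i|) with
  | empty => simp
  | insert a s ha hmax ih =>
    rw [prod_insert ha, card_insert_of_notMem ha, Nat.add_sub_cancel, pow_succ']
    specialize ih (fun i hi => hfar i (mem_insert_of_mem hi))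
      fun i hi j hj => hsep i (mem_insert_of_mem hi) j (mem_insert_of_mem hj)
    rcases s.eq_empty_or_nonempty with rfl | hs
    · simpa using hfar a (mem_insert_self a ∅)
    have hr : δ / 2 * #s ≤ |x₀ - x a| := by
      have hin : ∀ i ∈ insert a s, x i ∈ Set.Icc (x₀ - |x₀ - x a|) (x₀ + |x₀ - x a|) := by
        intro i hi
        have h : |x₀ - x i| ≤ |x₀ - x a| := by
          rcases mem_insert.1 hi with rfl | hi
          · exact le_rfl
          · exact hmax i hi
        rw [abs_le] at h
        constructor <;> linarith
      have := mul_card_sub_one_le_of_separated (insert a s) x (insert_nonempty a s) hin hsep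
      rw [card_insert_of_notMem ha] at this
      push_cast at this
      linarith
    rw [← Nat.mul_factorial_pred hs.card_pos.ne', Nat.cast_mul]
    calc δ / 2 * (δ / 2) ^ #s * ((#s : ℝ) * (#s - 1).factorial)
        = (δ / 2 * #s) * ((δ / 2) ^ #s * (#s - 1).factorial) := by ring
      _ ≤ |x₀ - x a| * ∏ i ∈ s, |x₀ - x i| := by gcongr

theorem norm_mul_prod_norm_sub_le_two_pow_mul_sqrt {n : ℕ} (ω : Fin n → ℂ)
    (hω : ∀ j, ‖ω j‖ ≤ 1) (a : Fin n → ℂ) (c z : ℂ) :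
    ‖c‖ * ∏ j, ‖z - ω j‖ ≤
      2 ^ n * √(∑ i : Fin (n + 1), ‖∑ j, a j * ω j ^ (i : ℕ) - c * z ^ (i : ℕ)‖ ^ 2) := by
  set p : ℂ[X] := ∏ j, (X - C (ω j))
  have hdeg : p.natDegree = n := by simp [p, natDegree_finsetProd_X_sub_C_eq_card]
  have hmahler : p.mahlerMeasure = 1 := by
    rw [mahlerMeasure_prod_X_sub_C]
    exact prod_eq_one fun j _ => max_eq_left (hω j)
  have hcoeff : ∑ i ∈ range (n + 1), ‖p.coeff i‖ ≤ 2 ^ n := by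
    simpa [hdeg, hmahler] using p.sum_norm_coeff_le_two_pow_mul_mahlerMeasure
  calc ‖c‖ * ∏ j, ‖z - ω j‖ = ‖c * p.eval z‖ := by simp [p, eval_prod, norm_prod]
    _ ≤ _ := norm_mul_eval_le_sum_norm_coeff_mul_sqrt n p hdeg.le ω
        (fun j => by simp [p, eval_prod, prod_eq_zero (mem_univ j)]) a c z
    _ ≤ _ := by gcongr

theorem stmt_19_general (n : ℕ) (M : ℝ) (hM : 0 < M)
    (θ : Fin n → ℝ) (hθ : ∀ j, θ j ∈ Set.Icc (-(π / 2)) (π / 2))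
    (τ' : ℝ) (hτ' : 0 < τ')
    (hsep : ∀ j l : Fin n, j ≠ l → τ' ≤ |θ j - θ l|)
    (θ0 : ℝ) (hθ0 : θ0 ∈ Set.Icc (-(π / 2)) (π / 2))
    (hfar : ∀ j, τ' / 2 ≤ |θ0 - θ j|)
    (ahat : Fin n → ℂ) :
    (M / π ^ n) * (τ' / 2) ^ n * (Nat.factorial (n - 1)) ≤
        (M / π ^ n) * ∏ j : Fin n, |θ0 - θ j| ∧
      (M / π ^ n) * ∏ j : Fin n, |θ0 - θ j| ≤
        Real.sqrt (∑ i : Fin (n + 1),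
          (‖((∑ j : Fin n, ahat j * (Complex.exp (Complex.I * θ j)) ^ (i : ℕ))
            - M * (Complex.exp (Complex.I * θ0)) ^ (i : ℕ))‖) ^ 2) := by
  refine ⟨?_, ?_⟩
  · rw [mul_assoc]
    gcongr
    simpa using pow_mul_factorial_le_prod_abs_sub univ θ θ0 hτ'.le (fun j _ => hfar j)
      fun j _ l _ => hsep j l
  · have hchord : ∏ j, 2 / π * |θ0 - θ j| ≤ ∏ j, ‖exp (I * θ0) - exp (I * θ j)‖ :=
      prod_le_prod (fun j _ => by positivity) fun j _ =>
        mul_abs_le_norm_exp_I_mul_sub_exp_I_mul <| abs_le.2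
          ⟨by linarith [hθ0.1, (hθ j).2], by linarith [hθ0.2, (hθ j).1]⟩
    rw [prod_mul_distrib, prod_const, card_univ, Fintype.card_fin] at hchord
    have hvdm := norm_mul_prod_norm_sub_le_two_pow_mul_sqrt (fun j => exp (I * θ j))
      (fun j => (norm_exp_I_mul_ofReal (θ j)).le) ahat M (exp (I * θ0))
    rw [Complex.norm_real, Real.norm_of_nonneg hM.le] at hvdm
    calc M / π ^ n * ∏ j, |θ0 - θ j| = M * ((2 / π) ^ n * ∏ j, |θ0 - θ j|) / 2 ^ n := by
          rw [div_pow]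
          field_simp
      _ ≤ (M * ∏ j, ‖exp (I * θ0) - exp (I * θ j)‖) / 2 ^ n := by gcongr
      _ ≤ _ := by rw [div_le_iff₀' (by positivity)]; exact hvdm

theorem stmt_19 (n : ℕ) (hn : 1 ≤ n) (M : ℝ) (hM : 0 < M)
    (θ : Fin n → ℝ) (hθ : ∀ j, θ j ∈ Set.Icc (-(π / 2)) (π / 2))
    (hinj : Function.Injective θ)
    (τ' : ℝ) (hτ' : 0 < τ')
    (hsep : ∀ j l : Fin n, j ≠ l → τ' ≤ |θ j - θ l|)
    (θ0 : ℝ) (hθ0 : θ0 ∈ Set.Icc (-(π / 2)) (π / 2))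
    (hfar : ∀ j, τ' / 2 ≤ |θ0 - θ j|)
    (ahat : Fin n → ℂ) :
    (M / π ^ n) * (τ' / 2) ^ n * (Nat.factorial (n - 1)) ≤
        (M / π ^ n) * ∏ j : Fin n, |θ0 - θ j| ∧
      (M / π ^ n) * ∏ j : Fin n, |θ0 - θ j| ≤
        Real.sqrt (∑ i : Fin (n + 1),
          (‖((∑ j : Fin n, ahat j * (Complex.exp (Complex.I * θ j)) ^ (i : ℕ))
            - M * (Complex.exp (Complex.I * θ0)) ^ (i : ℕ))‖) ^ 2) :=
  stmt_19_general n M hM θ hθ τ' hτ' hsep θ0 hθ0 hfar ahat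
end
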